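/- arXiv:1802.07419 — 5 statements merged into one kernel-verified Lean document; each statement's English description precedes it below -/
import Mathlib

section
/- For all n ≥ 1, all sites 1 ≤ i < j ≤ n, and all 0 ≤ t ≤ n, the operator A_i P_j^{(1)} annihilates ψ_t: (A_i P_j^{(1)}) ψ_t = 0. Consequently ⟨ψ_{t'}, (A_i P_j^{(1)}) ψ_t⟩ = 0 for all 0 ≤ t, t' ≤ n, and ⟨Ψ_n, (A_i P_j^{(1)}) Ψ_n⟩ = 0. -/
open scoped Classical
open Matrix

noncomputable section
namespace CatState

/-- The pattern `b^{⊗t} ⊗ |2⟩^{⊗(n-t)}` on `n` qutrits (`0`-based sites). -/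
def catPat (n t : ℕ) (b : Fin 3) : Fin n → Fin 3 := fun i => if (i : ℕ) < t then b else 2

/-- The vector `ψ_t`: `ψ_0 = |2⟩^{⊗n}`, and for `t ≥ 1`,
`ψ_t = |Cat_t⟩ ⊗ |2⟩^{⊗(n-t)}` where `|Cat_t⟩ = (|0⟩^{⊗t} + |1⟩^{⊗t})/√2`. -/
def psi (n t : ℕ) : (Fin n → Fin 3) → ℂ :=
  if t = 0 then fun x => if x = catPat n 0 0 then 1 else 0
  else fun x => (Real.sqrt 2 : ℂ)⁻¹ *
    ((if x = catPat n t 0 then 1 else 0) + (if x = catPat n t 1 then 1 else 0))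

/-- The history cat state `Ψ_n = (1/√(n+1)) Σ_{t=0}^{n} ψ_t`. -/
def histCat (n : ℕ) : (Fin n → Fin 3) → ℂ :=
  fun x => (Real.sqrt (n + 1) : ℂ)⁻¹ * ∑ t ∈ Finset.range (n + 1), psi n t x

/-- The single-site operator acting as the projector onto the span of `{|a⟩ : a ∈ s}`
on qutrit `i` and as the identity elsewhere. -/
def siteProj (n : ℕ) (i : Fin n) (s : Finset (Fin 3)) :
    Matrix (Fin n → Fin 3) (Fin n → Fin 3) ℂ :=
  Matrix.diagonal (fun x => if x i ∈ s then 1 else 0)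

/-- `A_i = |0⟩⟨0| + |2⟩⟨2|` on qutrit `i`, identity elsewhere. -/
def opA (n : ℕ) (i : Fin n) : Matrix (Fin n → Fin 3) (Fin n → Fin 3) ℂ :=
  siteProj n i {0, 2}

/-- `B_i = |1⟩⟨1| + |2⟩⟨2|` on qutrit `i`, identity elsewhere. -/
def opB (n : ℕ) (i : Fin n) : Matrix (Fin n → Fin 3) (Fin n → Fin 3) ℂ :=
  siteProj n i {1, 2}

/-- `P_i^{(1)} = |1⟩⟨1|` on qutrit `i`, identity elsewhere. -/
def opP1 (n : ℕ) (i : Fin n) : Matrix (Fin n → Fin 3) (Fin n → Fin 3) ℂ :=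
  siteProj n i {1}

lemma key (n : ℕ) (i j : Fin n) (hij : i < j) (t : ℕ) :
    ∀ x, (opA n i * opP1 n j).mulVec (psi n t) x = 0 := by
  intro x
  have hprod : opA n i * opP1 n j =
      Matrix.diagonal (fun x => (if x i ∈ ({0, 2} : Finset (Fin 3)) then (1:ℂ) else 0) *
        (if x j ∈ ({1} : Finset (Fin 3)) then 1 else 0)) := by
    simp [opA, opP1, siteProj, Matrix.diagonal_mul_diagonal]
  rw [hprod, Matrix.mulVec_diagonal]
  by_cases hi : x i ∈ ({0, 2} : Finset (Fin 3))
  · by_cases hj : x j ∈ ({1} : Finset (Fin 3))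
    · have hj1 : x j = 1 := by simpa using hj
      have hne : ∀ b : Fin 3, b ≠ 1 ∨ x i ≠ b → x ≠ catPat n t b := by
        intro b hb hx
        have hxj : x j = (if (j : ℕ) < t then b else 2) := by rw [hx]; rfl
        have hjt : (j : ℕ) < t := by
          by_contra h
          rw [if_neg h] at hxj
          rw [hj1] at hxj; exact absurd hxj (by decide)
        have hbb : b = 1 := by rw [if_pos hjt] at hxj; rw [← hxj, hj1]
        have hit : (i : ℕ) < t := lt_trans (Fin.lt_def.mp hij) hjt
        have hxi : x i = b := by rw [hx]; simp [catPat, hit]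
        rcases hb with hb | hb
        · exact hb hbb
        · exact hb hxi
      have h0 : x ≠ catPat n t 0 := hne 0 (Or.inl (by decide))
      have h1 : x ≠ catPat n t 1 := by
        refine hne 1 (Or.inr ?_)
        intro h
        rw [h] at hi
        simp at hi
      have hpsi : psi n t x = 0 := by
        unfold psi
        split
        · next ht => subst ht; simp [h0]
        · simp [h0, h1]
      rw [hpsi, mul_zero]
    · simp [hj]
  · simp [hi]

/-- for sites `i < j` the operator `A_i P_j^{(1)}` annihilates every `ψ_t`,
hence all matrix elements `⟨ψ_{t'}, (A_i P_j^{(1)}) ψ_t⟩` vanish, and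
`⟨Ψ_n, (A_i P_j^{(1)}) Ψ_n⟩ = 0`. -/
theorem cat_annihilation (n : ℕ) (hn : 1 ≤ n) (i j : Fin n) (hij : i < j) :
    (∀ t ≤ n, (opA n i * opP1 n j).mulVec (psi n t) = 0) ∧
    (∀ t ≤ n, ∀ t' ≤ n,
      star (psi n t') ⬝ᵥ (opA n i * opP1 n j).mulVec (psi n t) = 0) ∧
    star (histCat n) ⬝ᵥ (opA n i * opP1 n j).mulVec (histCat n) = 0 := by
  have hzero : ∀ t, (opA n i * opP1 n j).mulVec (psi n t) = 0 := by
    intro t; funext x; exact key n i j hij t x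
  refine ⟨fun t _ => hzero t, fun t _ t' _ => by rw [hzero t]; simp, ?_⟩
  have hc : histCat n = (Real.sqrt (n + 1) : ℂ)⁻¹ •
      ∑ t ∈ Finset.range (n + 1), psi n t := by
    funext x; simp [histCat, Finset.sum_apply]
  have : (opA n i * opP1 n j).mulVec (histCat n) = 0 := by
    rw [hc, Matrix.mulVec_smul]
    have : (opA n i * opP1 n j).mulVec (∑ t ∈ Finset.range (n + 1), psi n t)
        = ∑ t ∈ Finset.range (n + 1), (opA n i * opP1 n j).mulVec (psi n t) := by
      simp only [← Matrix.mulVecLin_apply]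
      exact map_sum ((opA n i * opP1 n j).mulVecLin) (psi n) (Finset.range (n+1))
    rw [this]
    simp [hzero]
  rw [this]; simp

end CatState
end
end

section
/- For all n ≥ 1 and every site 1 ≤ i ≤ n: ⟨Ψ_n, A_i Ψ_n⟩ = (n+1+i)/(2(n+1)) ≥ 1/2, ⟨Ψ_n, B_i Ψ_n⟩ = (n+1+i)/(2(n+1)) ≥ 1/2, and ⟨Ψ_n, P_i^{(1)} Ψ_n⟩ = (n+1−i)/(2(n+1)). -/
open scoped Classical
open Matrix

noncomputable section
namespace CatState

lemma catPat_eq_iff {n s t : ℕ} (hs : s ≤ n) (ht : t ≤ n) {b b' : Fin 3}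
    (hb : b ≠ 2) (hb' : b' ≠ 2) :
    catPat n s b = catPat n t b' ↔ (s = t ∧ (s = 0 ∨ b = b')) := by
  constructor
  · intro h
    have hst : s = t := by
      by_contra hne
      rcases Nat.lt_or_ge s t with hlt | hge
      · have hsn : s < n := lt_of_lt_of_le hlt ht
        have h2 := congrFun h ⟨s, hsn⟩
        simp only [catPat, lt_irrefl, if_false, hlt, if_true] at h2
        exact hb' h2.symm
      · have hts : t < s := lt_of_le_of_ne hge fun h' => hne h'.symm
        have htn : t < n := lt_of_lt_of_le hts hs
        have h2 := congrFun h ⟨t, htn⟩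
        simp only [catPat, lt_irrefl, if_false, hts, if_true] at h2
        exact hb h2
    refine ⟨hst, ?_⟩
    rcases Nat.eq_zero_or_pos s with h0 | hpos
    · exact Or.inl h0
    · right
      have hn0 : 0 < n := lt_of_lt_of_le hpos hs
      have h2 := congrFun h ⟨0, hn0⟩
      simp only [catPat] at h2
      rw [if_pos hpos, if_pos (hst ▸ hpos)] at h2
      exact h2
  · rintro ⟨rfl, h0 | rfl⟩
    · subst h0
      funext j
      simp [catPat]
    · rfl

lemma sqrt_two_inv_mul : ((Real.sqrt 2 : ℂ))⁻¹ * ((Real.sqrt 2 : ℂ))⁻¹ = (2:ℂ)⁻¹ := by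
  rw [← mul_inv, ← Complex.ofReal_mul, Real.mul_self_sqrt (by norm_num)]
  norm_num

lemma sum_ind {α : Type*} [Fintype α] [DecidableEq α] (p q : α) (d : α → ℂ) :
    ∑ x, (if x = p then (1:ℂ) else 0) * d x * (if x = q then (1:ℂ) else 0)
      = if p = q then d p else 0 := by
  classical
  have h : ∀ x, (if x = p then (1:ℂ) else 0) * d x * (if x = q then (1:ℂ) else 0)
      = if x = p then (if p = q then d p else 0) else 0 := by
    intro x
    by_cases h1 : x = p
    · subst h1; by_cases h2 : x = q <;> simp [h2]
    · simp [h1]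
  rcases eq_or_ne p q with rfl | hpq
  · simp [h]
  · simp [h, hpq, hpq.symm]

lemma G_eval (n : ℕ) (d : (Fin n → Fin 3) → ℂ) {s t : ℕ} (hs : s ≤ n) (ht : t ≤ n) :
    (∑ x, (starRingEnd ℂ) (psi n s x) * d x * psi n t x)
      = if s = t then (if s = 0 then d (catPat n 0 0)
          else (d (catPat n s 0) + d (catPat n s 1)) * (2:ℂ)⁻¹) else 0 := by
  have e00 : ((0:Fin 3) : Fin 3) ≠ 2 := by decide
  have e12 : ((1:Fin 3) : Fin 3) ≠ 2 := by decide
  have e01 : ((0:Fin 3) : Fin 3) ≠ 1 := by decide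
  have hp0 : ∀ x, psi n 0 x = if x = catPat n 0 0 then (1:ℂ) else 0 := fun x => by
    simp [psi]
  have hp : ∀ u, u ≠ 0 → ∀ x, psi n u x = (Real.sqrt 2 : ℂ)⁻¹ *
      ((if x = catPat n u 0 then (1:ℂ) else 0) + (if x = catPat n u 1 then (1:ℂ) else 0)) :=
    fun u hu x => by simp [psi, hu]
  have hc0 : ∀ x, (starRingEnd ℂ) (psi n 0 x) = if x = catPat n 0 0 then (1:ℂ) else 0 :=
    fun x => by rw [hp0]; split <;> simp
  have hc : ∀ u, u ≠ 0 → ∀ x, (starRingEnd ℂ) (psi n u x) = (Real.sqrt 2 : ℂ)⁻¹ *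
      ((if x = catPat n u 0 then (1:ℂ) else 0) + (if x = catPat n u 1 then (1:ℂ) else 0)) :=
    fun u hu x => by
      rw [hp u hu, _root_.map_mul, map_inv₀, Complex.conj_ofReal, map_add,
        apply_ite (starRingEnd ℂ), apply_ite (starRingEnd ℂ), _root_.map_one, map_zero]
  by_cases hs0 : s = 0 <;> by_cases ht0 : t = 0
  · subst hs0; subst ht0
    have key : ∀ x, (starRingEnd ℂ) (psi n 0 x) * d x * psi n 0 x
        = (if x = catPat n 0 0 then (1:ℂ) else 0) * d x *
          (if x = catPat n 0 0 then (1:ℂ) else 0) := fun x => by rw [hc0, hp0]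
    rw [Finset.sum_congr rfl (fun x _ => key x), sum_ind]
    simp
  · subst hs0
    have key : ∀ x, (starRingEnd ℂ) (psi n 0 x) * d x * psi n t x
        = (Real.sqrt 2 : ℂ)⁻¹ * ((if x = catPat n 0 0 then (1:ℂ) else 0) * d x *
            (if x = catPat n t 0 then (1:ℂ) else 0))
        + (Real.sqrt 2 : ℂ)⁻¹ * ((if x = catPat n 0 0 then (1:ℂ) else 0) * d x *
            (if x = catPat n t 1 then (1:ℂ) else 0)) := fun x => by
      rw [hc0, hp t ht0]; ring
    rw [Finset.sum_congr rfl (fun x _ => key x), Finset.sum_add_distrib, ← Finset.mul_sum,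
      ← Finset.mul_sum, sum_ind, sum_ind]
    have n1 : ¬ (catPat n 0 0 = catPat n t 0) := by
      rw [catPat_eq_iff (Nat.zero_le n) ht e00 e00]
      rintro ⟨h0, -⟩; exact ht0 h0.symm
    have n2 : ¬ (catPat n 0 0 = catPat n t 1) := by
      rw [catPat_eq_iff (Nat.zero_le n) ht e00 e12]
      rintro ⟨h0, -⟩; exact ht0 h0.symm
    simp [n1, n2, Ne.symm ht0]
  · subst ht0
    have key : ∀ x, (starRingEnd ℂ) (psi n s x) * d x * psi n 0 x
        = (Real.sqrt 2 : ℂ)⁻¹ * ((if x = catPat n s 0 then (1:ℂ) else 0) * d x *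
            (if x = catPat n 0 0 then (1:ℂ) else 0))
        + (Real.sqrt 2 : ℂ)⁻¹ * ((if x = catPat n s 1 then (1:ℂ) else 0) * d x *
            (if x = catPat n 0 0 then (1:ℂ) else 0)) := fun x => by
      rw [hc s hs0, hp0]; ring
    rw [Finset.sum_congr rfl (fun x _ => key x), Finset.sum_add_distrib, ← Finset.mul_sum,
      ← Finset.mul_sum, sum_ind, sum_ind]
    have n1 : ¬ (catPat n s 0 = catPat n 0 0) := by
      rw [catPat_eq_iff hs (Nat.zero_le n) e00 e00]
      rintro ⟨h0, -⟩; exact hs0 h0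
    have n2 : ¬ (catPat n s 1 = catPat n 0 0) := by
      rw [catPat_eq_iff hs (Nat.zero_le n) e12 e00]
      rintro ⟨h0, -⟩; exact hs0 h0
    simp [n1, n2, hs0]
  · have key : ∀ x, (starRingEnd ℂ) (psi n s x) * d x * psi n t x
        = ((Real.sqrt 2 : ℂ)⁻¹ * (Real.sqrt 2 : ℂ)⁻¹) *
        ((((if x = catPat n s 0 then (1:ℂ) else 0) * d x * (if x = catPat n t 0 then (1:ℂ) else 0))
        + ((if x = catPat n s 0 then (1:ℂ) else 0) * d x * (if x = catPat n t 1 then (1:ℂ) else 0))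
        + ((if x = catPat n s 1 then (1:ℂ) else 0) * d x * (if x = catPat n t 0 then (1:ℂ) else 0)))
        + ((if x = catPat n s 1 then (1:ℂ) else 0) * d x * (if x = catPat n t 1 then (1:ℂ) else 0))) := fun x => by
      rw [hc s hs0, hp t ht0]; ring
    rw [Finset.sum_congr rfl (fun x _ => key x), ← Finset.mul_sum, Finset.sum_add_distrib,
      Finset.sum_add_distrib, Finset.sum_add_distrib, sum_ind, sum_ind, sum_ind, sum_ind,
      sqrt_two_inv_mul]
    have i1 : (catPat n s 0 = catPat n t 0) ↔ s = t := by
      rw [catPat_eq_iff hs ht e00 e00]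
      exact ⟨fun h => h.1, fun h => ⟨h, Or.inr rfl⟩⟩
    have i2 : ¬ (catPat n s 0 = catPat n t 1) := by
      rw [catPat_eq_iff hs ht e00 e12]
      rintro ⟨-, h0 | h01⟩
      · exact hs0 h0
      · exact e01 h01
    have i3 : ¬ (catPat n s 1 = catPat n t 0) := by
      rw [catPat_eq_iff hs ht e12 e00]
      rintro ⟨-, h0 | h01⟩
      · exact hs0 h0
      · exact e01 h01.symm
    have i4 : (catPat n s 1 = catPat n t 1) ↔ s = t := by
      rw [catPat_eq_iff hs ht e12 e12]
      exact ⟨fun h => h.1, fun h => ⟨h, Or.inr rfl⟩⟩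
    rcases eq_or_ne s t with rfl | hst
    · simp only [i1, i2, i3, i4, if_true, if_false, if_pos rfl, if_neg hs0]
      ring
    · simp [i1, i2, i3, i4, hst]

lemma expectation_eq (n : ℕ) (d : (Fin n → Fin 3) → ℂ) :
    star (histCat n) ⬝ᵥ (Matrix.diagonal d).mulVec (histCat n)
      = ((n:ℂ)+1)⁻¹ * ∑ t ∈ Finset.range (n+1),
          (if t = 0 then d (catPat n 0 0)
           else (d (catPat n t 0) + d (catPat n t 1)) * (2:ℂ)⁻¹) := by
  have hc2 : ((Real.sqrt (n+1) : ℂ))⁻¹ * ((Real.sqrt (n+1) : ℂ))⁻¹ = ((n:ℂ)+1)⁻¹ := by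
    rw [← mul_inv, ← Complex.ofReal_mul, Real.mul_self_sqrt (by positivity)]
    push_cast
    ring
  have h1 : star (histCat n) ⬝ᵥ (Matrix.diagonal d).mulVec (histCat n)
      = ∑ x, (starRingEnd ℂ) (histCat n x) * (d x * histCat n x) := by
    simp [dotProduct, Matrix.mulVec_diagonal, Pi.star_apply, Complex.star_def]
  have hx : ∀ x, (starRingEnd ℂ) (histCat n x) * (d x * histCat n x)
      = (((Real.sqrt (n+1) : ℂ))⁻¹ * ((Real.sqrt (n+1) : ℂ))⁻¹) *
        ∑ s ∈ Finset.range (n+1), ∑ t ∈ Finset.range (n+1),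
          (starRingEnd ℂ) (psi n s x) * d x * psi n t x := by
    intro x
    simp only [histCat]
    rw [_root_.map_mul, map_inv₀, Complex.conj_ofReal, map_sum]
    rw [show ∀ a b c e : ℂ, (a * b) * (c * (a * e)) = (a * a) * (b * c * e) from
      fun a b c e => by ring]
    congr 1
    rw [Finset.sum_mul, Finset.sum_mul_sum]
  rw [h1, Finset.sum_congr rfl (fun x _ => hx x), ← Finset.mul_sum, hc2]
  congr 1
  rw [Finset.sum_comm]
  refine Finset.sum_congr rfl fun s hsmem => ?_
  rw [Finset.sum_comm]
  rw [Finset.sum_congr rfl (fun t htmem =>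
    G_eval n d (Nat.lt_succ_iff.mp (Finset.mem_range.mp hsmem))
      (Nat.lt_succ_iff.mp (Finset.mem_range.mp htmem)))]
  rw [Finset.sum_ite_eq]
  simp [hsmem]

lemma count_lt (n k : ℕ) (hk : k ≤ n) :
    ∑ t ∈ Finset.range n, (if t < k then (1:ℂ) else 0) = k := by
  rw [Finset.sum_boole]
  have h : (Finset.range n).filter (fun t => t < k) = Finset.range k := by
    ext a; simp [Finset.mem_filter, Finset.mem_range]; omega
  rw [h, Finset.card_range]

lemma count_ge (n k : ℕ) :
    ∑ t ∈ Finset.range n, (if k ≤ t then (1:ℂ) else 0) = ((n - k : ℕ) : ℂ) := by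
  rw [Finset.sum_boole]
  have h : (Finset.range n).filter (fun t => k ≤ t) = Finset.Ico k n := by
    ext a; simp [Finset.mem_filter, Finset.mem_range]; omega
  rw [h, Nat.card_Ico]

lemma siteProj_expect (n : ℕ) (i : Fin n) (s : Finset (Fin 3)) :
    star (histCat n) ⬝ᵥ (siteProj n i s).mulVec (histCat n)
      = ((n:ℂ)+1)⁻¹ * ∑ t ∈ Finset.range (n+1),
          (if t = 0 then (if (2:Fin 3) ∈ s then (1:ℂ) else 0)
           else ((if (catPat n t 0) i ∈ s then (1:ℂ) else 0)
             + (if (catPat n t 1) i ∈ s then (1:ℂ) else 0)) * (2:ℂ)⁻¹) := by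
  rw [siteProj, expectation_eq]
  congr 1

/-- expectation values of `A_i`, `B_i`, `P_i^{(1)}` in the history cat state.
Here `i : Fin n` is the `0`-based index of the `1`-based site `i+1`, so the claimed values
are `(n+1+(i+1))/(2(n+1)) ≥ 1/2` for `A` and `B`, and `(n+1-(i+1))/(2(n+1))` for `P^{(1)}`. -/
theorem cat_expectations (n : ℕ) (hn : 1 ≤ n) (i : Fin n) :
    star (histCat n) ⬝ᵥ (opA n i).mulVec (histCat n) =
      ((((n : ℝ) + 1 + (((i : ℕ) : ℝ) + 1)) / (2 * ((n : ℝ) + 1)) : ℝ) : ℂ) ∧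
    (1 / 2 : ℝ) ≤ ((n : ℝ) + 1 + (((i : ℕ) : ℝ) + 1)) / (2 * ((n : ℝ) + 1)) ∧
    star (histCat n) ⬝ᵥ (opB n i).mulVec (histCat n) =
      ((((n : ℝ) + 1 + (((i : ℕ) : ℝ) + 1)) / (2 * ((n : ℝ) + 1)) : ℝ) : ℂ) ∧
    star (histCat n) ⬝ᵥ (opP1 n i).mulVec (histCat n) =
      ((((n : ℝ) + 1 - (((i : ℕ) : ℝ) + 1)) / (2 * ((n : ℝ) + 1)) : ℝ) : ℂ) := by
  have hin : (i : ℕ) ≤ n := i.2.le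
  have hne : ((n:ℂ) + 1) ≠ 0 := Nat.cast_add_one_ne_zero n
  refine ⟨?_, ?_, ?_, ?_⟩
  · -- A
    have m0 : ((0:Fin 3) ∈ ({0,2} : Finset (Fin 3))) := by decide
    have m1 : ¬((1:Fin 3) ∈ ({0,2} : Finset (Fin 3))) := by decide
    have m2 : ((2:Fin 3) ∈ ({0,2} : Finset (Fin 3))) := by decide
    rw [opA, siteProj_expect, Finset.sum_range_succ']
    have hterm : ∀ t ∈ Finset.range n,
        (if t + 1 = 0 then (if (2:Fin 3) ∈ ({0,2} : Finset (Fin 3)) then (1:ℂ) else 0)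
         else ((if (catPat n (t+1) 0) i ∈ ({0,2} : Finset (Fin 3)) then (1:ℂ) else 0)
           + (if (catPat n (t+1) 1) i ∈ ({0,2} : Finset (Fin 3)) then (1:ℂ) else 0)) * (2:ℂ)⁻¹)
        = (1 + (if t < (i:ℕ) then (1:ℂ) else 0)) * (2:ℂ)⁻¹ := by
      intro t _
      rw [if_neg (Nat.succ_ne_zero t)]
      congr 1
      simp only [catPat]
      by_cases h : (i:ℕ) < t + 1
      · simp [h, m0, m1, show ¬ t < (i:ℕ) by omega]
      · simp [h, m2, show t < (i:ℕ) by omega]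
    rw [Finset.sum_congr rfl hterm]
    simp only [add_mul, one_mul]
    rw [Finset.sum_add_distrib, Finset.sum_const, ← Finset.sum_mul, count_lt n (i:ℕ) hin]
    simp only [eq_self_iff_true, if_true, m2, Finset.card_range, nsmul_eq_mul]
    push_cast
    field_simp
    ring
  · -- inequality
    rw [div_le_div_iff₀ (by norm_num) (by positivity)]
    have h0 : (0:ℝ) ≤ ((i:ℕ):ℝ) := Nat.cast_nonneg _
    nlinarith
  · -- B
    have m0 : ¬((0:Fin 3) ∈ ({1,2} : Finset (Fin 3))) := by decide
    have m1 : ((1:Fin 3) ∈ ({1,2} : Finset (Fin 3))) := by decide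
    have m2 : ((2:Fin 3) ∈ ({1,2} : Finset (Fin 3))) := by decide
    rw [opB, siteProj_expect, Finset.sum_range_succ']
    have hterm : ∀ t ∈ Finset.range n,
        (if t + 1 = 0 then (if (2:Fin 3) ∈ ({1,2} : Finset (Fin 3)) then (1:ℂ) else 0)
         else ((if (catPat n (t+1) 0) i ∈ ({1,2} : Finset (Fin 3)) then (1:ℂ) else 0)
           + (if (catPat n (t+1) 1) i ∈ ({1,2} : Finset (Fin 3)) then (1:ℂ) else 0)) * (2:ℂ)⁻¹)
        = (1 + (if t < (i:ℕ) then (1:ℂ) else 0)) * (2:ℂ)⁻¹ := by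
      intro t _
      rw [if_neg (Nat.succ_ne_zero t)]
      congr 1
      simp only [catPat]
      by_cases h : (i:ℕ) < t + 1
      · simp [h, m0, m1, show ¬ t < (i:ℕ) by omega]
      · simp [h, m2, show t < (i:ℕ) by omega]
    rw [Finset.sum_congr rfl hterm]
    simp only [add_mul, one_mul]
    rw [Finset.sum_add_distrib, Finset.sum_const, ← Finset.sum_mul, count_lt n (i:ℕ) hin]
    simp only [eq_self_iff_true, if_true, m2, Finset.card_range, nsmul_eq_mul]
    push_cast
    field_simp
    ring
  · -- P1
    have m0 : ¬((0:Fin 3) ∈ ({1} : Finset (Fin 3))) := by decide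
    have m1 : ((1:Fin 3) ∈ ({1} : Finset (Fin 3))) := by decide
    have m2 : ¬((2:Fin 3) ∈ ({1} : Finset (Fin 3))) := by decide
    rw [opP1, siteProj_expect, Finset.sum_range_succ']
    have hterm : ∀ t ∈ Finset.range n,
        (if t + 1 = 0 then (if (2:Fin 3) ∈ ({1} : Finset (Fin 3)) then (1:ℂ) else 0)
         else ((if (catPat n (t+1) 0) i ∈ ({1} : Finset (Fin 3)) then (1:ℂ) else 0)
           + (if (catPat n (t+1) 1) i ∈ ({1} : Finset (Fin 3)) then (1:ℂ) else 0)) * (2:ℂ)⁻¹)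
        = (if (i:ℕ) ≤ t then (1:ℂ) else 0) * (2:ℂ)⁻¹ := by
      intro t _
      rw [if_neg (Nat.succ_ne_zero t)]
      congr 1
      simp only [catPat]
      by_cases h : (i:ℕ) < t + 1
      · simp [h, m0, m1, show (i:ℕ) ≤ t by omega]
      · simp [h, m2, show ¬ (i:ℕ) ≤ t by omega]
    rw [Finset.sum_congr rfl hterm]
    rw [← Finset.sum_mul, count_ge n (i:ℕ)]
    simp only [eq_self_iff_true, if_true, if_neg m2]
    rw [Nat.cast_sub hin]
    have hcast : ((((n : ℝ) + 1 - (((i : ℕ) : ℝ) + 1)) / (2 * ((n : ℝ) + 1)) : ℝ) : ℂ)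
        = (((n:ℂ) + 1 - (((i:ℕ):ℂ) + 1)) / (2 * ((n:ℂ) + 1))) := by push_cast; ring
    rw [hcast, eq_div_iff (mul_ne_zero two_ne_zero hne)]
    have hre : ((n:ℂ) + 1)⁻¹ * (((n:ℂ) - ((i:ℕ):ℂ)) * 2⁻¹) * (2 * ((n:ℂ) + 1))
        = ((n:ℂ) - ((i:ℕ):ℂ)) * (((n:ℂ)+1)⁻¹ * ((n:ℂ)+1)) * ((2:ℂ)⁻¹ * 2) := by ring
    rw [add_zero, hre, inv_mul_cancel₀ hne, inv_mul_cancel₀ (two_ne_zero : (2:ℂ) ≠ 0)]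
    ring


end CatState
end
end

section
/- Let U = L_d⋯L_1 be a depth-d circuit on m qudits, let Y be a subset of the qudits, and let ρ = Tr_Y(U|0⟩⟨0|^{⊗m}U†). Let A and B be operators acting on disjoint sets of qudits, both disjoint from Y. If the lightcones K_U(A) and K_U(B) are disjoint (share no gate), then Tr((A ⊗ B)ρ) = Tr(Aρ)·Tr(Bρ), where A ⊗ B denotes the operator acting as A on supp(A), as B on supp(B), and as the identity elsewhere (and in Tr(Aρ), A is likewise extended by the identity). -/
/-!
In the Heisenberg picture `U† A U` is again local: conjugating by a layer enlarges the support
of an operator only by the gates of that layer that touch it, so `U† A U` is supported on the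
qudits reached by the lightcone of `A`, and likewise for `B`. Disjoint lightcones therefore give
disjoint supports. Since `A` and `B` avoid `Y`, the partial trace over `Y` is invisible to them
and `Tr(X ρ) = ⟨0| U† X U |0⟩` for `X = A, B, AB`. Finally `U† A B U = (U† A U)(U† B U)` is a
product of operators on disjoint sets of qudits, and diagonal entries of such a product factor.
-/
open scoped Classical ComplexOrder
open Matrix

noncomputable section
namespace QCircuit

/-- `M` acts nontrivially only on the qudits in `S` (it is `N ⊗ I` for some matrix `N`
on the sites in `S`). -/
def ActsOn {ι : Type} [Fintype ι] [DecidableEq ι] (q : ℕ)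
    (M : Matrix (ι → Fin q) (ι → Fin q) ℂ) (S : Finset ι) : Prop :=
  ∃ N : Matrix ({i : ι // i ∈ S} → Fin q) ({i : ι // i ∈ S} → Fin q) ℂ,
    ∀ x y : ι → Fin q,
      M x y =
        if ∀ i ∉ S, x i = y i then N (fun i => x i.1) (fun i => y i.1) else 0

/-- Partial trace over the qudits in `S`. -/
def ptrace {ι : Type} [Fintype ι] [DecidableEq ι] (q : ℕ) (S : Finset ι)
    (M : Matrix (ι → Fin q) (ι → Fin q) ℂ) :
    Matrix ({i : ι // i ∉ S} → Fin q) ({i : ι // i ∉ S} → Fin q) ℂ :=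
  fun x y => ∑ z : {i : ι // i ∈ S} → Fin q,
    M (fun i => if h : i ∈ S then z ⟨i, h⟩ else x ⟨i, h⟩)
      (fun i => if h : i ∈ S then z ⟨i, h⟩ else y ⟨i, h⟩)

/-- The rank-one outer product `|v⟩⟨v|`. -/
def outer {ι : Type} (v : ι → ℂ) : Matrix ι ι ℂ := fun x y => v x * star (v y)

/-- A density matrix: positive semidefinite with unit trace. -/
def IsDensityMatrix {ι : Type} [Fintype ι] (M : Matrix ι ι ℂ) : Prop :=
  M.PosSemidef ∧ M.trace = 1

/-- A gate on `m` qudits of local dimension `q`: a unitary acting nontrivially on at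
most two qudits. -/
structure Gate (q m : ℕ) where
  supp : Finset (Fin m)
  mat : Matrix (Fin m → Fin q) (Fin m → Fin q) ℂ
  card_le : supp.card ≤ 2
  unitary : mat ∈ Matrix.unitaryGroup (Fin m → Fin q) ℂ
  isLocal : ActsOn q mat supp

/-- A depth-`d` circuit on `m` qudits: `d` layers, each a list of gates with pairwise
disjoint supports. Layer `0` is applied first (it is `L_1` in the notation `U = L_d ⋯ L_1`). -/
structure Circuit (q m d : ℕ) where
  layers : Fin d → List (Gate q m)
  disjoint : ∀ j, (layers j).Pairwise (fun g h => Disjoint g.supp h.supp)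

/-- The unitary of one layer (product of its gates; order is irrelevant since supports
are disjoint). -/
def layerU {q m d : ℕ} (C : Circuit q m d) (j : Fin d) :
    Matrix (Fin m → Fin q) (Fin m → Fin q) ℂ :=
  ((C.layers j).map Gate.mat).prod

/-- The circuit unitary `U = L_d ⋯ L_1` (layer `d-1` applied last). -/
def circuitU {q m d : ℕ} (C : Circuit q m d) :
    Matrix (Fin m → Fin q) (Fin m → Fin q) ℂ :=
  ((List.ofFn fun j => layerU C j).reverse).prod

/-- The layers of a circuit, as a function on `ℕ` (empty beyond depth `d`). -/
def layerGet {q m d : ℕ} (C : Circuit q m d) (j : ℕ) : List (Gate q m) :=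
  if h : j < d then C.layers ⟨j, h⟩ else []

/-- The union of the supports of a list of gates. -/
def listSupp {q m : ℕ} (l : List (Gate q m)) : Finset (Fin m) :=
  l.foldr (fun g acc => g.supp ∪ acc) ∅

/-- `lcAux C S k` is `S` together with the supports of all lightcone gates (of the
operator supported on `S`) in the top `k` layers. -/
def lcAux {q m d : ℕ} (C : Circuit q m d) (S : Finset (Fin m)) : ℕ → Finset (Fin m)
  | 0 => S
  | k + 1 => lcAux C S k ∪
      listSupp ((layerGet C (d - 1 - k)).filter
        (fun g => decide (¬ Disjoint g.supp (lcAux C S k))))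

/-- The lightcone `K^{(j+1)}`: the gates of layer `j` (`0`-based) belonging to the
lightcone of an operator supported on `S`, defined from the top layer down. -/
def lightcone {q m d : ℕ} (C : Circuit q m d) (S : Finset (Fin m)) (j : ℕ) :
    List (Gate q m) :=
  (layerGet C j).filter (fun g => decide (¬ Disjoint g.supp (lcAux C S (d - 1 - j))))

/-- `ezSupp C S j` is the set of qudits in the supports of the gates of `E^{(j+1)}`,
the effect zone at (`0`-based) layer `j`, defined from the bottom layer up. -/
def ezSupp {q m d : ℕ} (C : Circuit q m d) (S : Finset (Fin m)) : ℕ → Finset (Fin m)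
  | 0 => listSupp (lightcone C S 0)
  | j + 1 => listSupp ((layerGet C (j + 1)).filter
      (fun g => decide (¬ Disjoint g.supp (ezSupp C S j))))

/-- The effect zone `E^{(j+1)}` at (`0`-based) layer `j`: `E^{(1)} = K^{(1)}`, and
`E^{(j)}` consists of the gates of layer `j` whose support meets `supp(E^{(j-1)})`. -/
def effectZone {q m d : ℕ} (C : Circuit q m d) (S : Finset (Fin m)) : ℕ → List (Gate q m)
  | 0 => lightcone C S 0
  | j + 1 => (layerGet C (j + 1)).filter
      (fun g => decide (¬ Disjoint g.supp (ezSupp C S j)))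

/-- The shadow of the effect zone: all qudits in the support of some effect-zone gate. -/
def shadow {q m d : ℕ} (C : Circuit q m d) (S : Finset (Fin m)) : Finset (Fin m) :=
  (Finset.range d).biUnion (fun j => ezSupp C S j)

/-- The all-zeroes product state `|0⟩⟨0|^{⊗m}`. -/
def zeroState (q m : ℕ) (hq : 0 < q) : Matrix (Fin m → Fin q) (Fin m → Fin q) ℂ :=
  outer (fun x => if x = (fun _ => ⟨0, hq⟩) then 1 else 0)

/-- Compression of an operator on all `m` qudits (acting trivially on the qudits in `Y`)
to an operator on the qudits outside `Y`, obtained by fixing the `Y`-coordinates. -/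
def compress {ι : Type} [Fintype ι] [DecidableEq ι] {q : ℕ} (hq : 0 < q) (Y : Finset ι)
    (A : Matrix (ι → Fin q) (ι → Fin q) ℂ) :
    Matrix ({i : ι // i ∉ Y} → Fin q) ({i : ι // i ∉ Y} → Fin q) ℂ :=
  fun x y =>
    A (fun i => if h : i ∈ Y then ⟨0, hq⟩ else x ⟨i, h⟩)
      (fun i => if h : i ∈ Y then ⟨0, hq⟩ else y ⟨i, h⟩)


section ActsOn

variable {ι : Type} [DecidableEq ι] {q : ℕ}

def glue (S : Finset ι) (a : {i // i ∈ S} → Fin q) (b : {i // i ∉ S} → Fin q) : ι → Fin q :=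
  fun i => if h : i ∈ S then a ⟨i, h⟩ else b ⟨i, h⟩

@[simp]
lemma glue_of_mem {S : Finset ι} (a : {i // i ∈ S} → Fin q) (b : {i // i ∉ S} → Fin q)
    {i : ι} (h : i ∈ S) : glue S a b i = a ⟨i, h⟩ :=
  dif_pos h

@[simp]
lemma glue_of_not_mem {S : Finset ι} (a : {i // i ∈ S} → Fin q) (b : {i // i ∉ S} → Fin q)
    {i : ι} (h : i ∉ S) : glue S a b i = b ⟨i, h⟩ :=
  dif_neg h

@[simp]
lemma glue_val_of_mem {S : Finset ι} (a : {i // i ∈ S} → Fin q) (b : {i // i ∉ S} → Fin q)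
    (i : {i // i ∈ S}) : glue S a b i = a i :=
  glue_of_mem a b i.2

@[simp]
lemma glue_val_of_not_mem {S : Finset ι} (a : {i // i ∈ S} → Fin q) (b : {i // i ∉ S} → Fin q)
    (i : {i // i ∉ S}) : glue S a b i = b i :=
  glue_of_not_mem a b i.2

variable [Fintype ι]

lemma sum_glue {M : Type*} [AddCommMonoid M] (S : Finset ι) (f : (ι → Fin q) → M) :
    ∑ z, f z = ∑ a, ∑ b, f (glue S a b) := by
  rw [← (Equiv.piEquivPiSubtypeProd (· ∈ S) fun _ => Fin q).symm.sum_comp, Fintype.sum_prod_type]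
  rfl

variable {M N : Matrix (ι → Fin q) (ι → Fin q) ℂ} {S T : Finset ι}

lemma ActsOn.mono (hM : ActsOn q M S) (hST : S ⊆ T) : ActsOn q M T := by
  obtain ⟨P, hP⟩ := hM
  refine ⟨fun a b => if ∀ i : {i // i ∈ T}, i.1 ∉ S → a i = b i
      then P (fun j => a ⟨j, hST j.2⟩) (fun j => b ⟨j, hST j.2⟩) else 0, fun x y => ?_⟩
  rw [hP]
  by_cases hT : ∀ i ∉ T, x i = y i
  · simp only [if_pos hT]
    congr 1
    exact propext ⟨fun h i hi => h i hi,
      fun h i hi => if hiT : i ∈ T then h ⟨i, hiT⟩ hi else hT i hiT⟩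
  · rw [if_neg hT, if_neg fun h => hT fun i hi => h i fun hS => hi (hST hS)]

lemma ActsOn.conjTranspose (hM : ActsOn q M S) : ActsOn q Mᴴ S := by
  obtain ⟨P, hP⟩ := hM
  refine ⟨Pᴴ, fun x y => ?_⟩
  simp only [conjTranspose_apply, hP, eq_comm (a := x _)]
  split_ifs <;> simp

lemma ActsOn.mul (hM : ActsOn q M S) (hN : ActsOn q N S) : ActsOn q (M * N) S := by
  obtain ⟨P, hP⟩ := hM
  obtain ⟨Q, hQ⟩ := hN
  refine ⟨P * Q, fun x y => ?_⟩
  rw [mul_apply, sum_glue S]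
  split_ifs with h
  · rw [mul_apply]
    refine Finset.sum_congr rfl fun a _ => ?_
    -- only the intermediate state equal to `x` off `S` contributes
    rw [Fintype.sum_eq_single (fun i => x i.1)]
    · rw [hP, hQ, if_pos fun i hi => by simp [hi], if_pos fun i hi => by simp [hi, h i hi]]
      simp
    · intro b hb
      rw [hP, if_neg, zero_mul]
      exact fun hxb => hb (funext fun i => by simpa using (hxb i.1 i.2).symm)
  · refine Finset.sum_eq_zero fun a _ => Finset.sum_eq_zero fun b _ => ?_
    by_cases hxz : ∀ i ∉ S, x i = glue S a b i
    · rw [hQ, if_neg fun hzy => h fun i hi => (hxz i hi).trans (hzy i hi), mul_zero]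
    · rw [hP, if_neg hxz, zero_mul]

end ActsOn

section Disjoint

variable {ι : Type} [DecidableEq ι] [Fintype ι] {q : ℕ}
  {M N : Matrix (ι → Fin q) (ι → Fin q) ℂ} {S T : Finset ι}

lemma mul_apply_of_disjoint {P : Matrix ({i // i ∈ S} → Fin q) ({i // i ∈ S} → Fin q) ℂ}
    {Q : Matrix ({i // i ∈ T} → Fin q) ({i // i ∈ T} → Fin q) ℂ}
    (hP : ∀ x y, M x y = if ∀ i ∉ S, x i = y i then P (fun i => x i) (fun i => y i) else 0)
    (hQ : ∀ x y, N x y = if ∀ i ∉ T, x i = y i then Q (fun i => x i) (fun i => y i) else 0)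
    (hST : Disjoint S T) (x y : ι → Fin q) :
    (M * N) x y = if ∀ i ∉ S ∪ T, x i = y i
      then P (fun i => x i) (fun i => y i) * Q (fun i => x i) (fun i => y i) else 0 := by
  rw [mul_apply, Fintype.sum_eq_single (fun i => if i ∈ S then y i else x i)]
  · have hS : (fun i : {i // i ∈ S} => if i.1 ∈ S then y i else x i) = fun i => y i.1 := by
      simp
    have hT : (fun i : {i // i ∈ T} => if i.1 ∈ S then y i else x i) = fun i => x i.1 := by
      simp [Finset.disjoint_right.mp hST]
    have hcond : (∀ i ∉ T, (if i ∈ S then y i else x i) = y i) ↔ ∀ i ∉ S ∪ T, x i = y i := by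
      simp only [Finset.mem_union, not_or, and_imp]
      refine ⟨fun h i hiS hiT => by simpa [hiS] using h i hiT, fun h i hiT => ?_⟩
      by_cases hiS : i ∈ S <;> simp [hiS, h i _ hiT]
    rw [hP, hQ, if_pos fun i hi => by simp [hi], hS, hT, mul_ite, mul_zero]
    exact if_congr hcond rfl rfl
  · intro z hz
    by_cases hxz : ∀ i ∉ S, x i = z i
    · rw [hQ, if_neg, mul_zero]
      refine fun hzy => hz (funext fun i => ?_)
      by_cases hiS : i ∈ S
      · simp [hiS, hzy i (Finset.disjoint_left.mp hST hiS)]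
      · simp [hiS, hxz i hiS]
    · rw [hP, if_neg hxz, zero_mul]

lemma ActsOn.commute_of_disjoint (hM : ActsOn q M S) (hN : ActsOn q N T) (hST : Disjoint S T) :
    Commute M N := by
  obtain ⟨P, hP⟩ := hM
  obtain ⟨Q, hQ⟩ := hN
  ext x y
  rw [mul_apply_of_disjoint hP hQ hST, mul_apply_of_disjoint hQ hP hST.symm, Finset.union_comm,
    mul_comm]

lemma ActsOn.mul_apply_diag_of_disjoint (hM : ActsOn q M S) (hN : ActsOn q N T)
    (hST : Disjoint S T) (v : ι → Fin q) : (M * N) v v = M v v * N v v := by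
  obtain ⟨P, hP⟩ := hM
  obtain ⟨Q, hQ⟩ := hN
  simp [mul_apply_of_disjoint hP hQ hST, hP, hQ]

lemma ActsOn.conj (hM : ActsOn q M S) (hN : ActsOn q N T) : ActsOn q (Nᴴ * M * N) (S ∪ T) :=
  ((hN.conjTranspose.mono Finset.subset_union_right).mul (hM.mono Finset.subset_union_left)).mul
    (hN.mono Finset.subset_union_right)

lemma ActsOn.conj_eq_self (hM : ActsOn q M S) (hN : ActsOn q N T) (hNN : Nᴴ * N = 1)
    (hST : Disjoint S T) : Nᴴ * M * N = M := by
  rw [mul_assoc, (hM.commute_of_disjoint hN hST).eq, ← mul_assoc, hNN, one_mul]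

end Disjoint

section PartialTrace

variable {ι : Type} [DecidableEq ι] [Fintype ι] {q : ℕ} (hq : 0 < q) {Y : Finset ι}

lemma compress_apply (A : Matrix (ι → Fin q) (ι → Fin q) ℂ) (x y : {i // i ∉ Y} → Fin q) :
    compress hq Y A x y = A (glue Y (fun _ => ⟨0, hq⟩) x) (glue Y (fun _ => ⟨0, hq⟩) y) :=
  rfl

lemma ptrace_apply (M : Matrix (ι → Fin q) (ι → Fin q) ℂ) (x y : {i // i ∉ Y} → Fin q) :
    ptrace q Y M x y = ∑ z, M (glue Y z x) (glue Y z y) :=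
  rfl

lemma ActsOn.apply_glue_glue {A : Matrix (ι → Fin q) (ι → Fin q) ℂ} {S : Finset ι}
    (hA : ActsOn q A S) (hSY : Disjoint S Y) (z z' : {i // i ∈ Y} → Fin q)
    (x x' : {i // i ∉ Y} → Fin q) :
    A (glue Y z x) (glue Y z' x') = if z = z' then compress hq Y A x x' else 0 := by
  obtain ⟨N, hN⟩ := hA.mono (Finset.subset_compl_iff_disjoint_right.mpr hSY)
  have hcond : ∀ (z z' : {i // i ∈ Y} → Fin q) (x x' : {i // i ∉ Y} → Fin q),
      (∀ i ∉ Yᶜ, glue Y z x i = glue Y z' x' i) ↔ z = z' := by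
    simp +contextual [funext_iff]
  have hoff : ∀ (z : {i // i ∈ Y} → Fin q) (x : {i // i ∉ Y} → Fin q),
      (fun i : {i // i ∈ Yᶜ} => glue Y z x i.1) = fun i => x ⟨i.1, Finset.mem_compl.mp i.2⟩ := by
    intro z x
    funext i
    exact glue_of_not_mem z x _
  simp only [compress_apply, hN, hcond, hoff]
  split_ifs <;> rfl

lemma trace_compress_mul_ptrace {A : Matrix (ι → Fin q) (ι → Fin q) ℂ} {S : Finset ι}
    (hA : ActsOn q A S) (hSY : Disjoint S Y) (M : Matrix (ι → Fin q) (ι → Fin q) ℂ) :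
    (compress hq Y A * ptrace q Y M).trace = (A * M).trace := by
  simp only [trace, diag_apply, mul_apply, ptrace_apply, Finset.mul_sum]
  rw [sum_glue Y fun u => ∑ v, A u v * M v u]
  simp only [sum_glue Y fun v => A _ v * M v _, hA.apply_glue_glue hq hSY, ite_mul, zero_mul,
    Finset.sum_ite_irrel, Finset.sum_const_zero, Finset.sum_ite_eq, Finset.mem_univ, if_true]
  exact (Finset.sum_congr rfl fun _ _ => Finset.sum_comm).trans Finset.sum_comm

end PartialTrace

lemma trace_mul_zeroState {q m : ℕ} (hq : 0 < q) (M : Matrix (Fin m → Fin q) (Fin m → Fin q) ℂ) :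
    (M * zeroState q m hq).trace = M (fun _ => ⟨0, hq⟩) (fun _ => ⟨0, hq⟩) := by
  have : zeroState q m hq = single (fun _ => ⟨0, hq⟩) (fun _ => ⟨0, hq⟩) 1 := by
    ext x y
    simp only [zeroState, outer, single_apply, ite_and, eq_comm]
    split_ifs <;> simp
  simp [this, trace_mul_single]

lemma conj_mul_eq_conj_conj {n : Type} [Fintype n] (U V A : Matrix n n ℂ) :
    (U * V)ᴴ * A * (U * V) = Vᴴ * (Uᴴ * A * U) * V := by
  simp only [conjTranspose_mul, mul_assoc]

section Circuit

variable {q m d : ℕ}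

lemma listSupp_cons (g : Gate q m) (l : List (Gate q m)) :
    listSupp (g :: l) = g.supp ∪ listSupp l :=
  rfl

lemma mem_listSupp {l : List (Gate q m)} {i : Fin m} : i ∈ listSupp l ↔ ∃ g ∈ l, i ∈ g.supp := by
  induction l with
  | nil => simp [listSupp]
  | cons g l ih => simp [listSupp_cons, ih]

lemma eq_of_mem_supp_of_mem_supp {l : List (Gate q m)}
    (hl : l.Pairwise fun g h => Disjoint g.supp h.supp) {g h : Gate q m} (hg : g ∈ l) (hh : h ∈ l)
    {i : Fin m} (hig : i ∈ g.supp) (hih : i ∈ h.supp) : g = h := by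
  have : Std.Symm fun g h : Gate q m => Disjoint g.supp h.supp := ⟨fun _ _ hd => hd.symm⟩
  by_contra hne
  exact Finset.disjoint_left.mp (hl.forall hg hh hne) hig hih

lemma Gate.conjTranspose_mul_self (g : Gate q m) : g.matᴴ * g.mat = 1 :=
  mem_unitaryGroup_iff'.mp g.unitary

lemma actsOn_conj_layer {l : List (Gate q m)} (hl : l.Pairwise fun g h => Disjoint g.supp h.supp)
    {A : Matrix (Fin m → Fin q) (Fin m → Fin q) ℂ} {T : Finset (Fin m)} (hA : ActsOn q A T) :
    ActsOn q (((l.map Gate.mat).prod)ᴴ * A * (l.map Gate.mat).prod)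
      (T ∪ listSupp (l.filter fun g => decide (¬Disjoint g.supp T))) := by
  induction l generalizing A T with
  | nil => simpa [listSupp] using hA
  | cons g l ih =>
    obtain ⟨hg, hl⟩ := List.pairwise_cons.mp hl
    rw [List.map_cons, List.prod_cons, conj_mul_eq_conj_conj]
    by_cases hgT : Disjoint g.supp T
    · rw [hA.conj_eq_self g.isLocal g.conjTranspose_mul_self hgT.symm,
        List.filter_cons_of_neg (by simpa using hgT)]
      exact ih hl hA
    · -- the later gates of the layer miss `g.supp`, so enlarging `T` by it changes no filter
      have hfilter : l.filter (fun h => decide ¬Disjoint h.supp (T ∪ g.supp)) =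
          l.filter fun h => decide ¬Disjoint h.supp T :=
        List.filter_congr fun h hh => by simp [Finset.disjoint_union_right, (hg h hh).symm]
      rw [List.filter_cons_of_pos (by simpa using hgT), listSupp_cons, ← Finset.union_assoc,
        ← hfilter]
      exact ih hl (hA.conj g.isLocal)

lemma layerGet_pairwise (C : Circuit q m d) (j : ℕ) :
    (layerGet C j).Pairwise fun g h => Disjoint g.supp h.supp := by
  unfold layerGet
  split
  · exact C.disjoint _
  · exact List.Pairwise.nil

lemma getElem_reverse_ofFn_layerU (C : Circuit q m d) {k : ℕ} (hk : k < d) :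
    (List.ofFn (layerU C)).reverse[k]'(by simpa using hk) =
      ((layerGet C (d - 1 - k)).map Gate.mat).prod := by
  simp [List.getElem_reverse, layerU, layerGet, show d - 1 - k < d by omega]

-- The first `k` factors of the reversed list form `L_{d-1} ⋯ L_{d-k}`, the top `k` layers.
lemma actsOn_conj_take_layers (C : Circuit q m d) {S : Finset (Fin m)}
    {A : Matrix (Fin m → Fin q) (Fin m → Fin q) ℂ} (hA : ActsOn q A S) {k : ℕ} (hk : k ≤ d) :
    ActsOn q ((((List.ofFn (layerU C)).reverse.take k).prod)ᴴ * A *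
      ((List.ofFn (layerU C)).reverse.take k).prod) (lcAux C S k) := by
  induction k with
  | zero => simpa [lcAux] using hA
  | succ k ih =>
    rw [List.prod_take_succ _ _ (by simpa using hk), getElem_reverse_ofFn_layerU C hk,
      conj_mul_eq_conj_conj]
    exact actsOn_conj_layer (layerGet_pairwise C _) (ih (by omega))

lemma actsOn_conj_circuitU (C : Circuit q m d) {S : Finset (Fin m)}
    {A : Matrix (Fin m → Fin q) (Fin m → Fin q) ℂ} (hA : ActsOn q A S) :
    ActsOn q ((circuitU C)ᴴ * A * circuitU C) (lcAux C S d) := by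
  simpa [circuitU, List.take_of_length_le] using actsOn_conj_take_layers C hA le_rfl

lemma circuitU_mul_conjTranspose (C : Circuit q m d) : circuitU C * (circuitU C)ᴴ = 1 := by
  refine mem_unitaryGroup_iff.mp (list_prod_mem fun U hU => ?_)
  obtain ⟨j, rfl⟩ := List.mem_ofFn.mp (List.mem_reverse.mp hU)
  exact list_prod_mem fun V hV => by
    obtain ⟨g, -, rfl⟩ := List.mem_map.mp hV
    exact g.unitary

lemma mem_lightcone_iff {C : Circuit q m d} {S : Finset (Fin m)} {k : ℕ} (hk : k < d)
    {g : Gate q m} :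
    g ∈ lightcone C S (d - 1 - k) ↔
      g ∈ layerGet C (d - 1 - k) ∧ ¬Disjoint g.supp (lcAux C S k) := by
  rw [lightcone, Nat.sub_sub_self (by omega : k ≤ d - 1)]
  simp

lemma mem_lcAux_succ {C : Circuit q m d} {S : Finset (Fin m)} {k : ℕ} (hk : k < d) {i : Fin m} :
    i ∈ lcAux C S (k + 1) ↔ i ∈ lcAux C S k ∨ ∃ g ∈ lightcone C S (d - 1 - k), i ∈ g.supp := by
  simp only [lcAux, Finset.mem_union, mem_listSupp, mem_lightcone_iff hk, List.mem_filter,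
    decide_eq_true_eq]

lemma disjoint_lcAux {C : Circuit q m d} {SA SB : Finset (Fin m)} (hAB : Disjoint SA SB)
    (hlc : ∀ j : ℕ, ∀ g ∈ lightcone C SA j, g ∉ lightcone C SB j) {k : ℕ} (hk : k ≤ d) :
    Disjoint (lcAux C SA k) (lcAux C SB k) := by
  induction k with
  | zero => exact hAB
  | succ k ih =>
    have hk : k < d := hk
    have mem_layer {S : Finset (Fin m)} {g : Gate q m} (hg : g ∈ lightcone C S (d - 1 - k)) :
        g ∈ layerGet C (d - 1 - k) :=
      ((mem_lightcone_iff hk).mp hg).1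
    refine Finset.disjoint_left.mpr fun i hiA hiB => ?_
    rw [mem_lcAux_succ hk] at hiA hiB
    rcases hiA with hiA | ⟨g, hgA, hig⟩ <;> rcases hiB with hiB | ⟨h, hhB, hih⟩
    · exact Finset.disjoint_left.mp (ih hk.le) hiA hiB
    · refine hlc _ h ((mem_lightcone_iff hk).mpr ⟨mem_layer hhB, ?_⟩) hhB
      exact Finset.not_disjoint_iff.mpr ⟨i, hih, hiA⟩
    · refine hlc _ g hgA ((mem_lightcone_iff hk).mpr ⟨mem_layer hgA, ?_⟩)
      exact Finset.not_disjoint_iff.mpr ⟨i, hig, hiB⟩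
    · obtain rfl := eq_of_mem_supp_of_mem_supp (layerGet_pairwise C _) (mem_layer hgA)
        (mem_layer hhB) hig hih
      exact hlc _ g hgA hhB

end Circuit

lemma trace_compress_mul_ptrace_conj_zeroState {q m : ℕ} (hq : 0 < q) {Y S : Finset (Fin m)}
    {A : Matrix (Fin m → Fin q) (Fin m → Fin q) ℂ} (hA : ActsOn q A S) (hSY : Disjoint S Y)
    (U : Matrix (Fin m → Fin q) (Fin m → Fin q) ℂ) :
    (compress hq Y A * ptrace q Y (U * zeroState q m hq * Uᴴ)).trace =
      (Uᴴ * A * U) (fun _ => ⟨0, hq⟩) (fun _ => ⟨0, hq⟩) := by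
  rw [trace_compress_mul_ptrace hq hA hSY, ← trace_mul_zeroState hq (Uᴴ * A * U)]
  simp only [← mul_assoc]
  rw [trace_mul_comm]
  simp only [← mul_assoc]

/-- if `ρ = Tr_Y(U|0⟩⟨0|^{⊗m}U†)` for a depth-`d` circuit `U`, and `A`, `B`
act on disjoint sets of qudits (both disjoint from `Y`) with disjoint lightcones, then
`Tr((A ⊗ B)ρ) = Tr(Aρ)·Tr(Bρ)` (here `A ⊗ B = A * B`, with operators extended by the
identity, and restricted to the qudits outside `Y` via `compress`). -/
theorem lightcone_factorization (q m d : ℕ) (hq : 0 < q) (C : Circuit q m d)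
    (Y SA SB : Finset (Fin m))
    (A B : Matrix (Fin m → Fin q) (Fin m → Fin q) ℂ)
    (hA : ActsOn q A SA) (hB : ActsOn q B SB)
    (hAB : Disjoint SA SB) (hAY : Disjoint SA Y) (hBY : Disjoint SB Y)
    (hlc : ∀ j : ℕ, ∀ g ∈ lightcone C SA j, g ∉ lightcone C SB j)
    (ρ : Matrix ({i : Fin m // i ∉ Y} → Fin q) ({i : Fin m // i ∉ Y} → Fin q) ℂ)
    (hρ : ρ = ptrace q Y (circuitU C * zeroState q m hq * (circuitU C)ᴴ)) :
    (compress hq Y (A * B) * ρ).trace =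
      (compress hq Y A * ρ).trace * (compress hq Y B * ρ).trace := by
  subst hρ
  set U := circuitU C
  have hAB_act : ActsOn q (A * B) (SA ∪ SB) :=
    (hA.mono Finset.subset_union_left).mul (hB.mono Finset.subset_union_right)
  have hconj_mul : Uᴴ * (A * B) * U = (Uᴴ * A * U) * (Uᴴ * B * U) := by
    calc Uᴴ * (A * B) * U = Uᴴ * A * (U * Uᴴ) * B * U := by
          rw [circuitU_mul_conjTranspose, mul_one]
          simp only [mul_assoc]
      _ = (Uᴴ * A * U) * (Uᴴ * B * U) := by simp only [mul_assoc]
  rw [trace_compress_mul_ptrace_conj_zeroState hq hAB_act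
      (Finset.disjoint_union_left.mpr ⟨hAY, hBY⟩),
    trace_compress_mul_ptrace_conj_zeroState hq hA hAY,
    trace_compress_mul_ptrace_conj_zeroState hq hB hBY, hconj_mul,
    (actsOn_conj_circuitU C hA).mul_apply_diag_of_disjoint (actsOn_conj_circuitU C hB)
      (disjoint_lcAux hAB hlc le_rfl)]

end QCircuit
end
end

section
/- Let n ≥ 1 and ε ≥ 0. Let (p_ℓ)_{ℓ∈L} be a finite probability distribution, let S_ℓ ⊆ {1,…,n} and let σ_ℓ be density matrices on (ℂ³)^{⊗n} satisfying Tr_{S_ℓ}(σ_ℓ) = Tr_{S_ℓ}(|Ψ_n⟩⟨Ψ_n|) for every ℓ, and set σ = Σ_ℓ p_ℓ σ_ℓ. Suppose the sites 1 ≤ i < j ≤ n satisfy Σ_{ℓ: i∈S_ℓ} p_ℓ ≤ 2ε and Σ_{ℓ: j∈S_ℓ} p_ℓ ≤ 2ε. Then Tr((A_i P_j^{(1)}) σ) ≤ 4ε, Tr(A_i σ) ≥ 1/2 − ε, and Tr(P_j^{(1)} σ) ≥ (n+1−j)/(2(n+1)) − ε. -/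
/-!
The observables `A_i`, `P_j^{(1)}` and `A_i P_j^{(1)}` are diagonal in the computational basis
and act only on sites `i` and `j`, so for `i, j ∉ S_ℓ` their expectation in `σ_ℓ` depends only on
`Tr_{S_ℓ} σ_ℓ` and equals their expectation in `Ψ_n`. Since the `ψ_t` have disjoint supports,
the diagonal of `|Ψ_n⟩⟨Ψ_n|` puts weight `1/(2(n+1))` on each of `0^t 2^{n-t}` and `1^t 2^{n-t}`,
`0 ≤ t ≤ n` (for `t = 0` the two coincide). No such configuration reads `0` or `2` at `i` and `1` at `j > i`, which kills
`A_i P_j^{(1)}`, while `A_i` has expectation at least `1/2` and `P_j^{(1)}` exactly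
`(n + 1 - j)/(2(n+1))`. All these expectations lie in `[0, 1]`, and the `ℓ` with a corrupted site
carry total weight at most `2ε` per site.
-/

open scoped Classical ComplexOrder
open Matrix

noncomputable section
namespace CatState

/-- Partial trace over the qudits in `S`: the unique linear map with
`Tr_S(M_1 ⊗ ⋯ ⊗ M_n) = (∏_{i∈S} Tr M_i) · ⊗_{i∉S} M_i`. -/
def ptrace {ι : Type} [Fintype ι] [DecidableEq ι] (q : ℕ) (S : Finset ι)
    (M : Matrix (ι → Fin q) (ι → Fin q) ℂ) :
    Matrix ({i : ι // i ∉ S} → Fin q) ({i : ι // i ∉ S} → Fin q) ℂ :=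
  fun x y => ∑ z : {i : ι // i ∈ S} → Fin q,
    M (fun i => if h : i ∈ S then z ⟨i, h⟩ else x ⟨i, h⟩)
      (fun i => if h : i ∈ S then z ⟨i, h⟩ else y ⟨i, h⟩)

/-- The rank-one outer product `|v⟩⟨v|`. -/
def outer {ι : Type} (v : ι → ℂ) : Matrix ι ι ℂ := fun x y => v x * star (v y)

/-- A density matrix: positive semidefinite with unit trace. -/
def IsDensityMatrix {ι : Type} [Fintype ι] (M : Matrix ι ι ℂ) : Prop :=
  M.PosSemidef ∧ M.trace = 1

section Mixture

variable {L : Type*} [Fintype L] {p E : L → ℝ}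

lemma sum_mul_le_sum_filter (B : L → Prop) [DecidablePred B] (hp : ∀ ℓ, 0 ≤ p ℓ)
    (hE : ∀ ℓ, E ℓ ≤ 1) (hgood : ∀ ℓ, ¬ B ℓ → E ℓ = 0) :
    ∑ ℓ, p ℓ * E ℓ ≤ ∑ ℓ ∈ Finset.univ.filter B, p ℓ := by
  rw [Finset.sum_filter]
  refine Finset.sum_le_sum fun ℓ _ => ?_
  split_ifs with h
  · exact mul_le_of_le_one_right (hp ℓ) (hE ℓ)
  · rw [hgood ℓ h, mul_zero]

lemma mul_one_sub_sum_filter_le (B : L → Prop) [DecidablePred B] (hp : ∀ ℓ, 0 ≤ p ℓ)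
    (hps : ∑ ℓ, p ℓ = 1) {c : ℝ} (hE : ∀ ℓ, 0 ≤ E ℓ) (hgood : ∀ ℓ, ¬ B ℓ → c ≤ E ℓ) :
    c * (1 - ∑ ℓ ∈ Finset.univ.filter B, p ℓ) ≤ ∑ ℓ, p ℓ * E ℓ := by
  rw [← hps, ← Finset.sum_filter_add_sum_filter_not Finset.univ B, add_sub_cancel_left,
    Finset.mul_sum]
  calc ∑ ℓ ∈ Finset.univ.filter (¬ B ·), c * p ℓ
      ≤ ∑ ℓ ∈ Finset.univ.filter (¬ B ·), p ℓ * E ℓ :=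
        Finset.sum_le_sum fun ℓ hℓ => by
          rw [mul_comm]
          exact mul_le_mul_of_nonneg_left (hgood ℓ (Finset.mem_filter.1 hℓ).2) (hp ℓ)
    _ ≤ ∑ ℓ, p ℓ * E ℓ :=
        Finset.sum_le_sum_of_subset_of_nonneg (Finset.subset_univ _)
          fun ℓ _ _ => mul_nonneg (hp ℓ) (hE ℓ)

lemma sum_filter_or_le (B B' : L → Prop) [DecidablePred B] [DecidablePred B']
    (hp : ∀ ℓ, 0 ≤ p ℓ) :
    ∑ ℓ ∈ Finset.univ.filter (fun ℓ => B ℓ ∨ B' ℓ), p ℓ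
      ≤ ∑ ℓ ∈ Finset.univ.filter B, p ℓ + ∑ ℓ ∈ Finset.univ.filter B', p ℓ := by
  rw [Finset.filter_or, ← Finset.sum_union_inter]
  exact le_add_of_nonneg_right (Finset.sum_nonneg fun ℓ _ => hp ℓ)

lemma sub_le_mul_one_sub {c ε m : ℝ} (hc0 : 0 ≤ c) (hc : c ≤ 1 / 2) (hε : 0 ≤ ε)
    (hm : m ≤ 2 * ε) : c - ε ≤ c * (1 - m) := by
  nlinarith [mul_le_mul_of_nonneg_left hm hc0]

end Mixture

lemma trace_diagonal_mul {ι R : Type*} [Fintype ι] [DecidableEq ι] [Semiring R] (d : ι → R)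
    (M : Matrix ι ι R) : (diagonal d * M).trace = ∑ x, d x * M x x := by
  simp [Matrix.trace, Matrix.diagonal_mul]

lemma re_trace_mul_sum_smul {ι L : Type*} [Fintype ι] [Fintype L] (D : Matrix ι ι ℂ)
    (p : L → ℝ) (M : L → Matrix ι ι ℂ) :
    (D * ∑ ℓ, p ℓ • M ℓ).trace.re = ∑ ℓ, p ℓ * (D * M ℓ).trace.re := by
  simp [Matrix.mul_sum, Matrix.trace_sum, Complex.re_sum]

section DensityMatrix

variable {ι : Type} [Fintype ι] [DecidableEq ι]

lemma re_trace_diagonal_indicator_mul (P : ι → Prop) [DecidablePred P] (M : Matrix ι ι ℂ) :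
    (diagonal (fun x => if P x then 1 else 0) * M).trace.re
      = ∑ x ∈ Finset.univ.filter P, (M x x).re := by
  simp [trace_diagonal_mul, Complex.re_sum, Finset.sum_filter, apply_ite Complex.re]

namespace IsDensityMatrix

variable {M : Matrix ι ι ℂ} {P : ι → Prop} [DecidablePred P]

lemma re_trace_diagonal_indicator_mul_nonneg (hM : IsDensityMatrix M) :
    0 ≤ (diagonal (fun x => if P x then 1 else 0) * M).trace.re := by
  rw [re_trace_diagonal_indicator_mul]
  exact Finset.sum_nonneg fun x _ => (Complex.nonneg_iff.1 hM.1.diag_nonneg).1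

lemma re_trace_diagonal_indicator_mul_le_one (hM : IsDensityMatrix M) :
    (diagonal (fun x => if P x then 1 else 0) * M).trace.re ≤ 1 := by
  rw [re_trace_diagonal_indicator_mul]
  calc ∑ x ∈ Finset.univ.filter P, (M x x).re ≤ ∑ x, (M x x).re :=
        Finset.sum_le_sum_of_subset_of_nonneg (Finset.subset_univ _)
          fun x _ _ => (Complex.nonneg_iff.1 hM.1.diag_nonneg).1
    _ = M.trace.re := by simp [Matrix.trace, Complex.re_sum]
    _ = 1 := by rw [hM.2, Complex.one_re]

end IsDensityMatrix

end DensityMatrix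

section PartialTrace

variable {ι : Type} [Fintype ι] [DecidableEq ι] {q : ℕ} (S : Finset ι)

def IsDiagonalOutside (D : Matrix (ι → Fin q) (ι → Fin q) ℂ) : Prop :=
  ∃ f : ({i // i ∉ S} → Fin q) → ℂ, D = diagonal fun x : ι → Fin q => f fun k => x k

lemma trace_diagonal_restrict_mul (f : ({i // i ∉ S} → Fin q) → ℂ)
    (M : Matrix (ι → Fin q) (ι → Fin q) ℂ) :
    ((diagonal fun x : ι → Fin q => f fun k => x k) * M).trace
      = (diagonal f * ptrace q S M).trace := by
  simp only [trace_diagonal_mul]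
  rw [← (Equiv.piEquivPiSubtypeProd (· ∈ S) _).symm.sum_comp, Fintype.sum_prod_type,
    Finset.sum_comm]
  refine Finset.sum_congr rfl fun w _ => ?_
  rw [ptrace, Finset.mul_sum]
  refine Finset.sum_congr rfl fun z _ => ?_
  congr 2
  funext k
  simp [k.2]

variable {S}

lemma IsDiagonalOutside.trace_mul_eq_of_ptrace_eq {D M N : Matrix (ι → Fin q) (ι → Fin q) ℂ}
    (hD : IsDiagonalOutside S D) (h : ptrace q S M = ptrace q S N) :
    (D * M).trace = (D * N).trace := by
  obtain ⟨f, rfl⟩ := hD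
  rw [trace_diagonal_restrict_mul, trace_diagonal_restrict_mul, h]

lemma IsDiagonalOutside.mul {D D' : Matrix (ι → Fin q) (ι → Fin q) ℂ}
    (hD : IsDiagonalOutside S D) (hD' : IsDiagonalOutside S D') :
    IsDiagonalOutside S (D * D') := by
  obtain ⟨f, rfl⟩ := hD
  obtain ⟨f', rfl⟩ := hD'
  exact ⟨f * f', by rw [diagonal_mul_diagonal]; rfl⟩

end PartialTrace

lemma siteProj_mul_siteProj {n : ℕ} (i j : Fin n) (s s' : Finset (Fin 3)) :
    siteProj n i s * siteProj n j s' = diagonal fun x => if x i ∈ s ∧ x j ∈ s' then 1 else 0 := by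
  rw [siteProj, siteProj, diagonal_mul_diagonal]
  simp_rw [ite_zero_mul_ite_zero, mul_one]

lemma isDiagonalOutside_siteProj {n : ℕ} {S : Finset (Fin n)} {i : Fin n} (hi : i ∉ S)
    (s : Finset (Fin 3)) : IsDiagonalOutside S (siteProj n i s) :=
  ⟨fun w => if w ⟨i, hi⟩ ∈ s then 1 else 0, rfl⟩

section HistoryState

variable {n : ℕ}

lemma eq_of_catPat_eq {t s : ℕ} (ht : t ≤ n) (hs : s ≤ n) {b b' : Fin 3}
    (hb : b ≠ 2) (hb' : b' ≠ 2) (h : catPat n t b = catPat n s b') : t = s := by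
  by_contra hne
  rcases Nat.lt_or_gt_of_ne hne with hlt | hlt
  · have := congrFun h ⟨t, by omega⟩
    simp only [catPat, lt_irrefl, if_false, hlt, if_true] at this
    exact hb' this.symm
  · have := congrFun h ⟨s, by omega⟩
    simp only [catPat, lt_irrefl, if_false, hlt, if_true] at this
    exact hb this

lemma exists_eq_catPat_of_psi_ne_zero {t : ℕ} {x : Fin n → Fin 3} (h : psi n t x ≠ 0) :
    ∃ b : Fin 3, b ≠ 2 ∧ x = catPat n t b := by
  by_contra! hx
  have h0 := hx 0 (by decide)
  have h1 := hx 1 (by decide)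
  unfold psi at h
  split_ifs at h <;> simp_all

lemma psi_mul_star_psi_of_ne {t s : ℕ} (ht : t ≤ n) (hs : s ≤ n) (hne : t ≠ s)
    (x : Fin n → Fin 3) : psi n t x * star (psi n s x) = 0 := by
  by_contra h
  obtain ⟨b, hb, hx⟩ := exists_eq_catPat_of_psi_ne_zero (left_ne_zero_of_mul h)
  obtain ⟨b', hb', hx'⟩ := exists_eq_catPat_of_psi_ne_zero (star_ne_zero.1 (right_ne_zero_of_mul h))
  exact hne (eq_of_catPat_eq ht hs hb hb' (hx.symm.trans hx'))

lemma psi_mul_star_psi_self {t : ℕ} (ht : t ≤ n) (x : Fin n → Fin 3) :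
    psi n t x * star (psi n t x)
      = ((if x = catPat n t 0 then 1 else 0) + (if x = catPat n t 1 then 1 else 0)) / 2 := by
  rcases Nat.eq_zero_or_pos t with rfl | htpos
  · have hcat : catPat n 0 1 = catPat n 0 0 := by funext; simp [catPat]
    rw [hcat]
    split_ifs <;> simp [psi, *]
  · have hdist : catPat n t 0 ≠ catPat n t 1 := fun h => by
      simpa [catPat, htpos] using congrFun h ⟨0, by omega⟩
    have hsqrt : ((Real.sqrt 2 : ℂ))⁻¹ * ((Real.sqrt 2 : ℂ))⁻¹ = 2⁻¹ := by
      rw [← mul_inv, ← Complex.ofReal_mul, Real.mul_self_sqrt zero_le_two]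
      norm_num
    simp only [psi, htpos.ne', if_false, star_mul', star_add, star_inv₀, Complex.star_def,
      Complex.conj_ofReal]
    split_ifs with h0 h1 h1
    · exact absurd (h0.symm.trans h1) hdist
    all_goals simp only [map_one, map_zero]
    · linear_combination hsqrt
    · linear_combination hsqrt
    · ring

lemma outer_histCat_apply_self (x : Fin n → Fin 3) :
    outer (histCat n) x x
      = ((n : ℂ) + 1)⁻¹ * ∑ t ∈ Finset.range (n + 1), psi n t x * star (psi n t x) := by
  have hnorm : (Real.sqrt (n + 1) : ℂ)⁻¹ * star ((Real.sqrt (n + 1) : ℂ)⁻¹) = ((n : ℂ) + 1)⁻¹ := by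
    rw [star_inv₀, Complex.star_def, Complex.conj_ofReal, ← mul_inv, ← Complex.ofReal_mul,
      Real.mul_self_sqrt (by positivity)]
    push_cast
    ring
  have horth : ∑ t ∈ Finset.range (n + 1), ∑ s ∈ Finset.range (n + 1),
      psi n t x * star (psi n s x) = ∑ t ∈ Finset.range (n + 1), psi n t x * star (psi n t x) :=
    Finset.sum_congr rfl fun t ht => Finset.sum_eq_single t
      (fun s hs hst => psi_mul_star_psi_of_ne (Finset.mem_range_succ_iff.1 ht)
        (Finset.mem_range_succ_iff.1 hs) (Ne.symm hst) x)
      (fun h => absurd ht h)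
  rw [outer, histCat, star_mul', star_sum, mul_mul_mul_comm, hnorm, Finset.sum_mul_sum, horth]

lemma sum_mul_psi_mul_star_psi {t : ℕ} (ht : t ≤ n) (d : (Fin n → Fin 3) → ℂ) :
    ∑ x, d x * (psi n t x * star (psi n t x)) = (d (catPat n t 0) + d (catPat n t 1)) / 2 := by
  simp_rw [psi_mul_star_psi_self ht]
  simp [mul_add, add_div, mul_div_assoc', Finset.sum_add_distrib, ← Finset.sum_div]

lemma trace_diagonal_mul_outer_histCat (d : (Fin n → Fin 3) → ℂ) :
    (diagonal d * outer (histCat n)).trace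
      = ((n : ℂ) + 1)⁻¹ *
          ∑ t ∈ Finset.range (n + 1), (d (catPat n t 0) + d (catPat n t 1)) / 2 := by
  rw [trace_diagonal_mul, ← Finset.sum_congr rfl fun t ht =>
    sum_mul_psi_mul_star_psi (Finset.mem_range_succ_iff.1 ht) d, Finset.sum_comm, Finset.mul_sum]
  refine Finset.sum_congr rfl fun x _ => ?_
  rw [outer_histCat_apply_self, ← Finset.mul_sum, mul_left_comm]

lemma sum_range_succ_ite_lt {k : ℕ} (hk : k ≤ n) :
    ∑ t ∈ Finset.range (n + 1), (if k < t then (1 : ℂ) else 0) = (n : ℂ) - k := by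
  rw [Finset.sum_boole, ← Nat.cast_sub hk,
    show (Finset.range (n + 1)).filter (k < ·) = Finset.Ioc k n by ext; simp; omega,
    Nat.card_Ioc]

lemma trace_opP1_mul_outer_histCat (j : Fin n) :
    (opP1 n j * outer (histCat n)).trace = (((n - j : ℝ) / (2 * (n + 1)) : ℝ) : ℂ) := by
  rw [opP1, siteProj, trace_diagonal_mul_outer_histCat, Finset.sum_congr rfl fun t _ =>
    show _ = (if (j : ℕ) < t then (1 : ℂ) else 0) / 2 by
      by_cases h : (j : ℕ) < t <;> simp [catPat, h],
    ← Finset.sum_div, sum_range_succ_ite_lt j.2.le]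
  push_cast
  field_simp

lemma trace_opA_mul_outer_histCat (i : Fin n) :
    (opA n i * outer (histCat n)).trace = (((n + i + 2 : ℝ) / (2 * (n + 1)) : ℝ) : ℂ) := by
  rw [opA, siteProj, trace_diagonal_mul_outer_histCat, Finset.sum_congr rfl fun t _ =>
    show _ = (2 - if (i : ℕ) < t then (1 : ℂ) else 0) / 2 by
      by_cases h : (i : ℕ) < t <;> norm_num [catPat, h, Fin.ext_iff],
    ← Finset.sum_div, Finset.sum_sub_distrib, sum_range_succ_ite_lt i.2.le, Finset.sum_const,
    Finset.card_range, nsmul_eq_mul]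
  push_cast
  field_simp
  ring

lemma one_half_le_re_trace_opA_mul_outer_histCat (i : Fin n) :
    1 / 2 ≤ (opA n i * outer (histCat n)).trace.re := by
  rw [trace_opA_mul_outer_histCat, Complex.ofReal_re, le_div_iff₀ (by positivity)]
  linarith [(i : ℕ).cast_nonneg (α := ℝ)]

lemma trace_opA_mul_opP1_mul_outer_histCat {i j : Fin n} (hij : i < j) :
    (opA n i * opP1 n j * outer (histCat n)).trace = 0 := by
  rw [opA, opP1, siteProj_mul_siteProj, trace_diagonal_mul_outer_histCat,
    Finset.sum_eq_zero, mul_zero]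
  intro t _
  by_cases h : (j : ℕ) < t
  · simp [catPat, h, (show (i : ℕ) < j from hij).trans h]
  · simp [catPat, h]

end HistoryState

/-- `i j : Fin n` are `0`-based: the paper's sites are `i + 1` and `j + 1`. -/
theorem cat_noisy_expectations_general (n : ℕ) (ε : ℝ) (hε : 0 ≤ ε)
    {L : Type} [Fintype L] (p : L → ℝ) (hp : ∀ ℓ, 0 ≤ p ℓ) (hps : ∑ ℓ, p ℓ = 1)
    (S : L → Finset (Fin n))
    (σf : L → Matrix (Fin n → Fin 3) (Fin n → Fin 3) ℂ)
    (hσf : ∀ ℓ, IsDensityMatrix (σf ℓ))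
    (htr : ∀ ℓ, ptrace 3 (S ℓ) (σf ℓ) = ptrace 3 (S ℓ) (outer (histCat n)))
    (i j : Fin n) (hij : i < j)
    (hi : ∑ ℓ ∈ Finset.univ.filter (fun ℓ => i ∈ S ℓ), p ℓ ≤ 2 * ε)
    (hj : ∑ ℓ ∈ Finset.univ.filter (fun ℓ => j ∈ S ℓ), p ℓ ≤ 2 * ε)
    (σ : Matrix (Fin n → Fin 3) (Fin n → Fin 3) ℂ)
    (hσ : σ = ∑ ℓ, p ℓ • σf ℓ) :
    ((opA n i * opP1 n j) * σ).trace.re ≤ 4 * ε ∧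
    (1 / 2 - ε : ℝ) ≤ ((opA n i) * σ).trace.re ∧
    (((n : ℝ) - (j : ℕ)) / (2 * ((n : ℝ) + 1)) - ε) ≤ ((opP1 n j) * σ).trace.re := by
  have hclean : ∀ D ℓ, IsDiagonalOutside (S ℓ) D →
      (D * σf ℓ).trace = (D * outer (histCat n)).trace :=
    fun _ ℓ hD => hD.trace_mul_eq_of_ptrace_eq (htr ℓ)
  subst hσ
  simp only [re_trace_mul_sum_smul]
  refine ⟨?_, ?_, ?_⟩
  · have hbad := sum_mul_le_sum_filter (fun ℓ => i ∈ S ℓ ∨ j ∈ S ℓ) hp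
      (E := fun ℓ => (opA n i * opP1 n j * σf ℓ).trace.re)
      (fun ℓ => by
        rw [opA, opP1, siteProj_mul_siteProj]
        exact (hσf ℓ).re_trace_diagonal_indicator_mul_le_one)
      fun ℓ hℓ => by
        obtain ⟨hiℓ, hjℓ⟩ := not_or.1 hℓ
        rw [hclean (opA n i * opP1 n j) ℓ
          ((isDiagonalOutside_siteProj hiℓ _).mul (isDiagonalOutside_siteProj hjℓ _)),
          trace_opA_mul_opP1_mul_outer_histCat hij, Complex.zero_re]
    linarith [sum_filter_or_le (fun ℓ => i ∈ S ℓ) (fun ℓ => j ∈ S ℓ) hp]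
  · calc 1 / 2 - ε ≤ 1 / 2 * (1 - ∑ ℓ ∈ Finset.univ.filter (fun ℓ => i ∈ S ℓ), p ℓ) :=
          sub_le_mul_one_sub (by norm_num) le_rfl hε hi
      _ ≤ ∑ ℓ, p ℓ * (opA n i * σf ℓ).trace.re := mul_one_sub_sum_filter_le _ hp hps
          (fun ℓ => (hσf ℓ).re_trace_diagonal_indicator_mul_nonneg) fun ℓ hℓ => by
            rw [hclean (opA n i) ℓ (isDiagonalOutside_siteProj hℓ _)]
            exact one_half_le_re_trace_opA_mul_outer_histCat i
  · set c := ((n : ℝ) - (j : ℕ)) / (2 * ((n : ℝ) + 1))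
    have hc0 : 0 ≤ c := div_nonneg (by linarith [(show (j : ℝ) ≤ n by exact_mod_cast j.2.le)])
      (by positivity)
    have hc : c ≤ 1 / 2 := by
      rw [div_le_iff₀ (by positivity)]
      linarith [(j : ℕ).cast_nonneg (α := ℝ)]
    calc c - ε ≤ c * (1 - ∑ ℓ ∈ Finset.univ.filter (fun ℓ => j ∈ S ℓ), p ℓ) :=
          sub_le_mul_one_sub hc0 hc hε hj
      _ ≤ ∑ ℓ, p ℓ * (opP1 n j * σf ℓ).trace.re := mul_one_sub_sum_filter_le _ hp hps
          (fun ℓ => (hσf ℓ).re_trace_diagonal_indicator_mul_nonneg) fun ℓ hℓ => by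
            rw [hclean (opP1 n j) ℓ (isDiagonalOutside_siteProj hℓ _), trace_opP1_mul_outer_histCat,
              Complex.ofReal_re]

/-- if `σ = Σ_ℓ p_ℓ σ_ℓ` is a convex combination of states agreeing with the
history cat state `Ψ_n` outside the corrupted sets `S_ℓ`, and the sites `i < j` each have
corruption probability at most `2ε`, then `Tr((A_i P_j^{(1)})σ) ≤ 4ε`,
`Tr(A_i σ) ≥ 1/2 - ε` and `Tr(P_j^{(1)} σ) ≥ (n+1-(j+1))/(2(n+1)) - ε`
(here `j : Fin n` is `0`-based, so the `1`-based site is `j+1`). -/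
theorem cat_noisy_expectations (n : ℕ) (hn : 1 ≤ n) (ε : ℝ) (hε : 0 ≤ ε)
    {L : Type} [Fintype L] (p : L → ℝ) (hp : ∀ ℓ, 0 ≤ p ℓ) (hps : ∑ ℓ, p ℓ = 1)
    (S : L → Finset (Fin n))
    (σf : L → Matrix (Fin n → Fin 3) (Fin n → Fin 3) ℂ)
    (hσf : ∀ ℓ, IsDensityMatrix (σf ℓ))
    (htr : ∀ ℓ, ptrace 3 (S ℓ) (σf ℓ) = ptrace 3 (S ℓ) (outer (histCat n)))
    (i j : Fin n) (hij : i < j)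
    (hi : ∑ ℓ ∈ Finset.univ.filter (fun ℓ => i ∈ S ℓ), p ℓ ≤ 2 * ε)
    (hj : ∑ ℓ ∈ Finset.univ.filter (fun ℓ => j ∈ S ℓ), p ℓ ≤ 2 * ε)
    (σ : Matrix (Fin n → Fin 3) (Fin n → Fin 3) ℂ)
    (hσ : σ = ∑ ℓ, p ℓ • σf ℓ) :
    ((opA n i * opP1 n j) * σ).trace.re ≤ 4 * ε ∧
    (1 / 2 - ε : ℝ) ≤ ((opA n i) * σ).trace.re ∧
    (((n : ℝ) - (j : ℕ)) / (2 * ((n : ℝ) + 1)) - ε) ≤ ((opP1 n j) * σ).trace.re :=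
  cat_noisy_expectations_general n ε hε p hp hps S σf hσf htr i j hij hi hj σ hσ

end CatState
end
end

section
/- Let H = Σ_{j=1}^{M} H_j be a Hamiltonian on (ℂ^q)^{⊗n}, where each H_j is Hermitian with operator norm ‖H_j‖ ≤ 1 and acts nontrivially only on a set supp(H_j) of qudits, and suppose each qudit belongs to supp(H_j) for at most g values of j (bounded degree g). Then every ε-noisy ground state σ of H is a low-energy state: Tr(Hσ) ≤ λ_min(H) + 2gεn. -/
open scoped Classical ComplexOrder
open Matrix

noncomputable section
namespace NoisyLowEnergy

/-- `M` acts nontrivially only on the qudits in `S`. -/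
def ActsOn {ι : Type} [Fintype ι] [DecidableEq ι] (q : ℕ)
    (M : Matrix (ι → Fin q) (ι → Fin q) ℂ) (S : Finset ι) : Prop :=
  ∃ N : Matrix ({i : ι // i ∈ S} → Fin q) ({i : ι // i ∈ S} → Fin q) ℂ,
    ∀ x y : ι → Fin q,
      M x y =
        if ∀ i ∉ S, x i = y i then N (fun i => x i.1) (fun i => y i.1) else 0

/-- Partial trace over the qudits in `S`. -/
def ptrace {ι : Type} [Fintype ι] [DecidableEq ι] (q : ℕ) (S : Finset ι)
    (M : Matrix (ι → Fin q) (ι → Fin q) ℂ) :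
    Matrix ({i : ι // i ∉ S} → Fin q) ({i : ι // i ∉ S} → Fin q) ℂ :=
  fun x y => ∑ z : {i : ι // i ∈ S} → Fin q,
    M (fun i => if h : i ∈ S then z ⟨i, h⟩ else x ⟨i, h⟩)
      (fun i => if h : i ∈ S then z ⟨i, h⟩ else y ⟨i, h⟩)

/-- A density matrix: positive semidefinite with unit trace. -/
def IsDensityMatrix {ι : Type} [Fintype ι] (M : Matrix ι ι ℂ) : Prop :=
  M.PosSemidef ∧ M.trace = 1

/-- The energy `Tr(Hρ)` of a state `ρ` for a Hamiltonian `H` (a real number). -/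
def energy {ι : Type} [Fintype ι] (H ρ : Matrix ι ι ℂ) : ℝ := ((H * ρ).trace).re

/-- The ground energy `λ_min(H)`: the infimum of `Tr(Hρ)` over density matrices `ρ`. -/
def groundEnergy {ι : Type} [Fintype ι] (H : Matrix ι ι ℂ) : ℝ :=
  sInf { e : ℝ | ∃ ρ, IsDensityMatrix ρ ∧ energy H ρ = e }

/-- A ground state: a density matrix with `Tr(Hρ) = λ_min(H)`. -/
def IsGroundState {ι : Type} [Fintype ι] (H ρ : Matrix ι ι ℂ) : Prop :=
  IsDensityMatrix ρ ∧ energy H ρ = groundEnergy H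

/-- An `ε`-error state for `H`. -/
def IsEpsErrorState {n q : ℕ} (H : Matrix (Fin n → Fin q) (Fin n → Fin q) ℂ)
    (ε : ℝ) (σ : Matrix (Fin n → Fin q) (Fin n → Fin q) ℂ) : Prop :=
  IsDensityMatrix σ ∧
    ∃ (ρ : Matrix (Fin n → Fin q) (Fin n → Fin q) ℂ) (S : Finset (Fin n)),
      IsGroundState H ρ ∧ ((S.card : ℝ) ≤ ε * n) ∧ ptrace q S σ = ptrace q S ρ

/-- An `ε`-noisy ground state of `H`: a finite convex combination of `ε`-error states. -/
def IsNoisyGroundState {n q : ℕ} (H : Matrix (Fin n → Fin q) (Fin n → Fin q) ℂ)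
    (ε : ℝ) (σ : Matrix (Fin n → Fin q) (Fin n → Fin q) ℂ) : Prop :=
  ∃ (L : Type) (_ : Fintype L) (p : L → ℝ)
      (f : L → Matrix (Fin n → Fin q) (Fin n → Fin q) ℂ),
    (∀ ℓ, 0 ≤ p ℓ) ∧ (∑ ℓ, p ℓ = 1) ∧ (∀ ℓ, IsEpsErrorState H ε (f ℓ)) ∧
    σ = ∑ ℓ, p ℓ • f ℓ

/-!
An `ε`-error state `σ` coincides with a ground state `ρ` after tracing out a set `S` of at most
`εn` qudits. A term `H_j` whose support misses `S` is of the form `1_S ⊗ B_j`, so `Tr(H_j σ)`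
depends only on `Tr_S σ` and equals `Tr(H_j ρ)`. By the degree bound at most `g|S| ≤ gεn` terms
meet `S`, and since `-1 ≤ H_j ≤ 1` each of them changes the energy by at most `2`. The bound is
affine in the state, so it passes to convex combinations.
-/

section Trace

variable {ι 𝕜 : Type*} [Fintype ι] [DecidableEq ι] [RCLike 𝕜]

open scoped MatrixOrder in
theorem trace_mul_nonneg_of_posSemidef {A B : Matrix ι ι 𝕜} (hA : A.PosSemidef)
    (hB : B.PosSemidef) : 0 ≤ (A * B).trace := by
  obtain ⟨C, rfl⟩ := CStarAlgebra.nonneg_iff_eq_star_mul_self.mp hB.nonneg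
  rw [← Matrix.mul_assoc, trace_mul_comm, ← Matrix.mul_assoc, star_eq_conjTranspose]
  exact (hA.mul_mul_conjTranspose_same C).trace_nonneg

end Trace

section Energy

variable {ι κ : Type} [Fintype ι]

theorem energy_sum_left (s : Finset κ) (H : κ → Matrix ι ι ℂ) (τ : Matrix ι ι ℂ) :
    energy (∑ j ∈ s, H j) τ = ∑ j ∈ s, energy (H j) τ := by
  simp only [energy, Finset.sum_mul, trace_sum, Complex.re_sum]

theorem energy_sum_smul_right (s : Finset κ) (H : Matrix ι ι ℂ) (p : κ → ℝ)
    (f : κ → Matrix ι ι ℂ) :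
    energy H (∑ ℓ ∈ s, p ℓ • f ℓ) = ∑ ℓ ∈ s, p ℓ * energy H (f ℓ) := by
  simp only [energy, Matrix.mul_sum, trace_sum, Complex.re_sum, mul_smul_comm, trace_smul,
    Complex.real_smul, Complex.re_ofReal_mul]

variable [DecidableEq ι]

theorem energy_le_one {H τ : Matrix ι ι ℂ} (hH : (1 - H).PosSemidef) (hτ : IsDensityMatrix τ) :
    energy H τ ≤ 1 := by
  have h := (Complex.nonneg_iff.mp (trace_mul_nonneg_of_posSemidef hH hτ.1)).1
  rw [sub_mul, one_mul, trace_sub, hτ.2, Complex.sub_re, Complex.one_re] at h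
  exact sub_nonneg.mp h

theorem neg_one_le_energy {H τ : Matrix ι ι ℂ} (hH : (1 + H).PosSemidef)
    (hτ : IsDensityMatrix τ) : -1 ≤ energy H τ := by
  have h := (Complex.nonneg_iff.mp (trace_mul_nonneg_of_posSemidef hH hτ.1)).1
  rw [add_mul, one_mul, trace_add, hτ.2, Complex.add_re, Complex.one_re] at h
  exact neg_le_iff_add_nonneg'.mpr h

end Energy

section Locality

variable {ι : Type} [Fintype ι] [DecidableEq ι] {q : ℕ}

abbrev splitConfig (q : ℕ) (S : Finset ι) :
    (ι → Fin q) ≃ ({i // i ∈ S} → Fin q) × ({i // i ∉ S} → Fin q) :=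
  Equiv.piEquivPiSubtypeProd (· ∈ S) fun _ => Fin q

theorem ptrace_apply (S : Finset ι) (τ : Matrix (ι → Fin q) (ι → Fin q) ℂ)
    (u v : {i // i ∉ S} → Fin q) :
    ptrace q S τ u v =
      ∑ z, τ ((splitConfig q S).symm (z, u)) ((splitConfig q S).symm (z, v)) :=
  rfl

theorem trace_mul_eq_trace_mul_ptrace {S : Finset ι} {A : Matrix (ι → Fin q) (ι → Fin q) ℂ}
    (B : Matrix ({i // i ∉ S} → Fin q) ({i // i ∉ S} → Fin q) ℂ)
    (hAB : ∀ z z' u v, A ((splitConfig q S).symm (z, u)) ((splitConfig q S).symm (z', v)) =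
      if z = z' then B u v else 0)
    (τ : Matrix (ι → Fin q) (ι → Fin q) ℂ) :
    (A * τ).trace = (B * ptrace q S τ).trace := by
  simp only [trace, diag, mul_apply, ptrace_apply, Finset.mul_sum]
  rw [← (splitConfig q S).symm.sum_comp, Fintype.sum_prod_type, Finset.sum_comm]
  refine Finset.sum_congr rfl fun u _ => ?_
  simp only [← (splitConfig q S).symm.sum_comp, Fintype.sum_prod_type, hAB, ite_mul, zero_mul]
  conv_lhs => enter [2, z]; rw [Finset.sum_comm]
  simp only [Finset.sum_ite_eq, Finset.mem_univ, if_true]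
  exact Finset.sum_comm

/-- Writing configurations as `(x_S, x_{Sᶜ})`, the conclusion says `A = 1_S ⊗ B`. -/
theorem ActsOn.exists_eq_ite_of_disjoint {T S : Finset ι}
    {A : Matrix (ι → Fin q) (ι → Fin q) ℂ} (hA : ActsOn q A T) (hTS : Disjoint T S) :
    ∃ B : Matrix ({i // i ∉ S} → Fin q) ({i // i ∉ S} → Fin q) ℂ, ∀ z z' u v,
      A ((splitConfig q S).symm (z, u)) ((splitConfig q S).symm (z', v)) =
        if z = z' then B u v else 0 := by
  obtain ⟨N, hN⟩ := hA
  have hT : ∀ i ∈ T, i ∉ S := fun i hi => Finset.disjoint_left.mp hTS hi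
  refine ⟨fun u v => if ∀ i : {i // i ∉ S}, i.1 ∉ T → u i = v i then
    N (fun i => u ⟨i, hT i i.2⟩) (fun i => v ⟨i, hT i i.2⟩) else 0, fun z z' u v => ?_⟩
  rw [hN]
  by_cases hz : z = z'
  · subst hz
    rw [if_pos rfl]
    refine if_congr ⟨fun h i hi => ?_, fun h i hi => ?_⟩ ?_ rfl
    · simpa [i.2] using h i hi
    · by_cases hS : i ∈ S
      · simp [hS]
      · simpa [hS] using h ⟨i, hS⟩ hi
    · congr 1 <;> funext i <;> simp [hT i i.2]
  · rw [if_neg hz, if_neg]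
    intro h
    exact hz (funext fun i => by simpa using h i fun hi => hT i hi i.2)

theorem ActsOn.trace_mul_eq_of_ptrace_eq {T S : Finset ι}
    {A σ ρ : Matrix (ι → Fin q) (ι → Fin q) ℂ} (hA : ActsOn q A T) (hTS : Disjoint T S)
    (h : ptrace q S σ = ptrace q S ρ) : (A * σ).trace = (A * ρ).trace := by
  obtain ⟨B, hB⟩ := hA.exists_eq_ite_of_disjoint hTS
  rw [trace_mul_eq_trace_mul_ptrace B hB, trace_mul_eq_trace_mul_ptrace B hB, h]

end Locality

section LocalHamiltonian

open Finset

variable {ι κ : Type} [DecidableEq ι] [Fintype κ]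

theorem card_filter_not_disjoint_le (supps : κ → Finset ι) (S : Finset ι) {g : ℕ}
    (hdeg : ∀ i ∈ S, #{j | i ∈ supps j} ≤ g) :
    #{j | ¬Disjoint (supps j) S} ≤ #S * g := by
  refine (card_le_card fun j hj => ?_).trans (S.card_biUnion_le_card_mul _ g hdeg)
  obtain ⟨i, hi, hiS⟩ := not_disjoint_iff.mp (mem_filter.mp hj).2
  exact mem_biUnion.mpr ⟨i, hiS, mem_filter.mpr ⟨mem_univ _, hi⟩⟩

theorem energy_sub_energy_le_of_ptrace_eq [Fintype ι] {q : ℕ}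
    {terms : κ → Matrix (ι → Fin q) (ι → Fin q) ℂ} {supps : κ → Finset ι}
    (hnorm : ∀ j, (1 - terms j).PosSemidef ∧ (1 + terms j).PosSemidef)
    (hloc : ∀ j, ActsOn q (terms j) (supps j)) {S : Finset ι}
    {σ ρ : Matrix (ι → Fin q) (ι → Fin q) ℂ} (hσ : IsDensityMatrix σ) (hρ : IsDensityMatrix ρ)
    (h : ptrace q S σ = ptrace q S ρ) :
    energy (∑ j, terms j) σ - energy (∑ j, terms j) ρ ≤ 2 * #{j | ¬Disjoint (supps j) S} := by
  rw [energy_sum_left, energy_sum_left, ← sum_sub_distrib,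
    ← sum_filter_add_sum_filter_not univ fun j => Disjoint (supps j) S]
  have hfar : ∑ j with Disjoint (supps j) S, (energy (terms j) σ - energy (terms j) ρ) = 0 :=
    sum_eq_zero fun j hj => by
      rw [energy, energy, (hloc j).trace_mul_eq_of_ptrace_eq (mem_filter.mp hj).2 h, sub_self]
  have hnear : ∑ j with ¬Disjoint (supps j) S, (energy (terms j) σ - energy (terms j) ρ) ≤
      ∑ j with ¬Disjoint (supps j) S, 2 :=
    sum_le_sum fun j _ => by
      linarith [energy_le_one (hnorm j).1 hσ, neg_one_le_energy (hnorm j).2 hρ]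
  rw [hfar, zero_add]
  simpa [mul_comm] using hnear

theorem IsEpsErrorState.energy_le {n q g : ℕ}
    {terms : κ → Matrix (Fin n → Fin q) (Fin n → Fin q) ℂ} {supps : κ → Finset (Fin n)}
    (hnorm : ∀ j, (1 - terms j).PosSemidef ∧ (1 + terms j).PosSemidef)
    (hloc : ∀ j, ActsOn q (terms j) (supps j)) (hdeg : ∀ i, #{j | i ∈ supps j} ≤ g)
    {ε : ℝ} {σ : Matrix (Fin n → Fin q) (Fin n → Fin q) ℂ}
    (hσ : IsEpsErrorState (∑ j, terms j) ε σ) :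
    energy (∑ j, terms j) σ ≤ groundEnergy (∑ j, terms j) + 2 * g * ε * n := by
  obtain ⟨hσ, ρ, S, ⟨hρ, hρ_ground⟩, hS, h⟩ := hσ
  have hcount : (#{j | ¬Disjoint (supps j) S} : ℝ) ≤ g * (ε * n) :=
    calc _ ≤ ((#S * g : ℕ) : ℝ) := by
          exact_mod_cast card_filter_not_disjoint_le supps S fun i _ => hdeg i
      _ = g * #S := by push_cast; ring
      _ ≤ g * (ε * n) := by gcongr
  linarith [energy_sub_energy_le_of_ptrace_eq hnorm hloc hσ hρ h]

end LocalHamiltonian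

theorem noisy_ground_state_low_energy_general (q n M g : ℕ)
    (terms : Fin M → Matrix (Fin n → Fin q) (Fin n → Fin q) ℂ)
    (supps : Fin M → Finset (Fin n))
    (hnorm : ∀ j, (1 - terms j).PosSemidef ∧ (1 + terms j).PosSemidef)
    (hloc : ∀ j, ActsOn q (terms j) (supps j))
    (hdeg : ∀ i : Fin n, (Finset.univ.filter (fun j => i ∈ supps j)).card ≤ g)
    (ε : ℝ)
    (σ : Matrix (Fin n → Fin q) (Fin n → Fin q) ℂ)
    (hσ : IsNoisyGroundState (∑ j, terms j) ε σ) :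
    energy (∑ j, terms j) σ ≤ groundEnergy (∑ j, terms j) + 2 * g * ε * n := by
  obtain ⟨L, _, p, f, hp_nonneg, hp_sum, hf, rfl⟩ := hσ
  rw [energy_sum_smul_right]
  calc ∑ ℓ, p ℓ * energy (∑ j, terms j) (f ℓ)
      ≤ ∑ ℓ, p ℓ * (groundEnergy (∑ j, terms j) + 2 * g * ε * n) :=
        Finset.sum_le_sum fun ℓ _ =>
          mul_le_mul_of_nonneg_left ((hf ℓ).energy_le hnorm hloc hdeg) (hp_nonneg ℓ)
    _ = groundEnergy (∑ j, terms j) + 2 * g * ε * n := by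
        rw [← Finset.sum_mul, hp_sum, one_mul]

/-- for a bounded-degree local Hamiltonian `H = Σ_j H_j` (each `H_j`
Hermitian of operator norm at most `1`, i.e. `1 ± H_j` PSD, supported on `supp(H_j)`,
with each qudit in the support of at most `g` terms), every `ε`-noisy ground state `σ`
satisfies `Tr(Hσ) ≤ λ_min(H) + 2gεn`. -/
theorem noisy_ground_state_low_energy (q n M g : ℕ) (hq : 0 < q)
    (terms : Fin M → Matrix (Fin n → Fin q) (Fin n → Fin q) ℂ)
    (supps : Fin M → Finset (Fin n))
    (hherm : ∀ j, (terms j).IsHermitian)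
    (hnorm : ∀ j, (1 - terms j).PosSemidef ∧ (1 + terms j).PosSemidef)
    (hloc : ∀ j, ActsOn q (terms j) (supps j))
    (hdeg : ∀ i : Fin n, (Finset.univ.filter (fun j => i ∈ supps j)).card ≤ g)
    (ε : ℝ) (hε : 0 ≤ ε)
    (σ : Matrix (Fin n → Fin q) (Fin n → Fin q) ℂ)
    (hσ : IsNoisyGroundState (∑ j, terms j) ε σ) :
    energy (∑ j, terms j) σ ≤ groundEnergy (∑ j, terms j) + 2 * g * ε * n :=
  noisy_ground_state_low_energy_general q n M g terms supps hnorm hloc hdeg ε σ hσ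

end NoisyLowEnergy
end
end
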